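/- arXiv:2602.13428 — 5 statements merged into one kernel-verified Lean document; each statement's English description precedes it below -/
import Mathlib

section
/- Let d ≥ 2 and let S be a nonempty subset of Sym(d). For n ≥ 1 let σ_n = #π_n(W_S), let f_n be the number of elements of π_n(W_S) fixing at least one vertex of level n, and let p_n = f_n/σ_n. Then for every n ≥ 1: f_{n+1} = Σ_{k=1}^{d} D_S(k) · σ_n^{d−k} · (σ_n^k − (σ_n − f_n)^k), and equivalently p_{n+1} = f_S(p_n); in particular any limit of the sequence (p_n) is a fixed point of f_S. -/
open Filter Polynomial

namespace TreePaper

/-- Vertices of the regular rooted tree over alphabet `X`: finite words. -/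
abbrev V (X : Type*) := List X

variable {X : Type*}

/-- A permutation of the vertex set fixes the root and preserves adjacency
(sends children of `v` to children of the image of `v`). -/
def IsTreeHom (g : Equiv.Perm (V X)) : Prop :=
  g [] = [] ∧ ∀ (v : V X) (a : X), ∃ b : X, g (v ++ [a]) = g v ++ [b]

lemma IsTreeHom.mul {g h : Equiv.Perm (V X)} (hg : IsTreeHom g) (hh : IsTreeHom h) :
    IsTreeHom (g * h) := by
  constructor
  · simp only [Equiv.Perm.mul_apply, hh.1, hg.1]
  · intro v a
    obtain ⟨b, hb⟩ := hh.2 v a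
    obtain ⟨c, hc⟩ := hg.2 (h v) b
    exact ⟨c, by simp only [Equiv.Perm.mul_apply, hb, hc]⟩

lemma IsTreeHom.one : IsTreeHom (1 : Equiv.Perm (V X)) :=
  ⟨rfl, fun _ a => ⟨a, rfl⟩⟩

/-- The automorphism group of the regular rooted tree with alphabet `X`,
realized as a subgroup of the permutations of the vertex set. -/
def AutT (X : Type*) : Subgroup (Equiv.Perm (V X)) where
  carrier := {g | IsTreeHom g ∧ IsTreeHom g⁻¹}
  one_mem' := ⟨IsTreeHom.one, by rw [inv_one]; exact IsTreeHom.one⟩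
  mul_mem' := by
    intro a b ha hb
    exact ⟨ha.1.mul hb.1, by rw [mul_inv_rev]; exact hb.2.mul ha.2⟩
  inv_mem' := by
    intro a ha
    exact ⟨ha.2, by rw [inv_inv]; exact ha.1⟩

/-- Restriction of the action of `g` to the `n`-th level of the tree. -/
def res (n : ℕ) (g : Equiv.Perm (V X)) : {v : V X // v.length = n} → V X :=
  fun v => g v.1

/-- `π_n(G)`: the set of actions of elements of `G` on the `n`-th level
(equivalently, on the first `n` levels). -/
def piSet (G : Set (Equiv.Perm (V X))) (n : ℕ) : Set ({v : V X // v.length = n} → V X) :=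
  res n '' G

/-- The elements of `π_n(G)` fixing at least one vertex of level `n`. -/
def fixSet (G : Set (Equiv.Perm (V X))) (n : ℕ) :
    Set ({v : V X // v.length = n} → V X) :=
  {f | f ∈ piSet G n ∧ ∃ v : {v : V X // v.length = n}, f v = v.1}

/-- The sequence `p_n` whose limit is the fixed-point proportion `FPP(G)`. -/
noncomputable def FPPseq (G : Set (Equiv.Perm (V X))) (n : ℕ) : ℝ :=
  ((fixSet G n).ncard : ℝ) / ((piSet G n).ncard : ℝ)

/-- Hausdorff dimension of a subgroup (or subset) of `Aut(T)`. -/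
noncomputable def hausdorffDim (G : Set (Equiv.Perm (V X))) : ℝ :=
  Filter.liminf (fun n : ℕ =>
    Real.log ((piSet G n).ncard) /
      Real.log ((piSet (AutT X : Set (Equiv.Perm (V X))) n).ncard)) Filter.atTop

/-- `σ` is the label `g|_v^1` of `g` at the vertex `v`. -/
def HasLabel (g : Equiv.Perm (V X)) (v : V X) (σ : Equiv.Perm X) : Prop :=
  ∀ a : X, g (v ++ [a]) = g v ++ [σ a]

/-- The (generalized) iterated wreath product `W_S` of a set `S` of permutations:
all tree automorphisms all of whose labels lie in `S`. -/
def WS (S : Set (Equiv.Perm X)) : Set (Equiv.Perm (V X)) :=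
  {g | g ∈ AutT X ∧ ∀ v : V X, ∃ σ ∈ S, HasLabel g v σ}

/-- The group `G_Q^P`: tree automorphisms whose labels lie in `P` and any two of
whose labels lie in the same coset of `Q`. -/
def GQP (Q P : Subgroup (Equiv.Perm X)) : Set (Equiv.Perm (V X)) :=
  {g | g ∈ AutT X ∧ (∀ v : V X, ∃ σ ∈ P, HasLabel g v σ) ∧
    ∀ (v w : V X) (σ τ : Equiv.Perm X), HasLabel g v σ → HasLabel g w τ → σ * τ⁻¹ ∈ Q}

/-- `G` acts transitively on every level of the tree. -/
def LevelTransitive (G : Set (Equiv.Perm (V X))) : Prop :=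
  ∀ v w : V X, v.length = w.length → ∃ g ∈ G, g v = w

/-- The section (as a function) of `g` at the vertex `v`. -/
def sectionMap (g : Equiv.Perm (V X)) (v : V X) : V X → V X :=
  fun w => (g (v ++ w)).drop v.length

/-- `G` is self-similar: all sections of elements of `G` belong to `G`. -/
def SelfSimilar (G : Set (Equiv.Perm (V X))) : Prop :=
  ∀ g ∈ G, ∀ v : V X, ∃ h ∈ G, ∀ w : V X, h w = sectionMap g v w

/-- `K` has finite index in `G` (finitely many left cosets of `K` cover `G`). -/
def FiniteIndexIn (K G : Set (Equiv.Perm (V X))) : Prop :=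
  ∃ F : Finset (Equiv.Perm (V X)), ∀ g ∈ G, ∃ t ∈ F, ∃ k ∈ K, g = t * k

/-- The geometric product `K_1`: elements of the first level stabilizer all of whose
first-level sections lie in `K`. -/
def geomProd (K : Set (Equiv.Perm (V X))) : Set (Equiv.Perm (V X)) :=
  {g | g ∈ AutT X ∧ (∀ a : X, g [a] = [a]) ∧
    ∀ a : X, ∃ h ∈ K, ∀ w : V X, h w = sectionMap g [a] w}

/-- `G` is regular branch over `K`. -/
def RegularBranchOver (G K : Set (Equiv.Perm (V X))) : Prop :=
  LevelTransitive G ∧ K ⊆ G ∧ geomProd K ⊆ K ∧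
    FiniteIndexIn (geomProd K) K ∧ FiniteIndexIn K G

/-- `G` is regular branch (over some subgroup). -/
def RegularBranch (G : Set (Equiv.Perm (V X))) : Prop :=
  ∃ K : Set (Equiv.Perm (V X)), RegularBranchOver G K

/-- `G` is closed in `Aut(T)` for the profinite topology. -/
def IsClosedSub (G : Set (Equiv.Perm (V X))) : Prop :=
  ∀ g ∈ AutT X, (∀ n : ℕ, ∃ h ∈ G, res n h = res n g) → g ∈ G

/-- `D_S(k)`: the number of permutations in `S` fixing exactly `k` points. -/
def DS {d : ℕ} (S : Finset (Equiv.Perm (Fin d))) (k : ℕ) : ℕ :=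
  (S.filter fun σ => (Finset.univ.filter fun x => σ x = x).card = k).card

/-- The characteristic polynomial `f_S` of a set of permutations `S`. -/
noncomputable def charPoly {d : ℕ} (S : Finset (Equiv.Perm (Fin d))) : Polynomial ℝ :=
  ∑ k ∈ Finset.Icc 1 d,
    Polynomial.C ((DS S k : ℝ) / (S.card : ℝ)) * (1 - (1 - Polynomial.X) ^ k)



/-! ### Auxiliary machinery -/

section Aux

variable {X : Type*}

lemma IsTreeHom.length_apply {g : Equiv.Perm (V X)} (hg : IsTreeHom g) (v : V X) :
    (g v).length = v.length := by
  induction v using List.reverseRecOn with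
  | nil => simp [hg.1]
  | append_singleton v a ih =>
      obtain ⟨b, hb⟩ := hg.2 v a
      simp [hb, ih]

lemma IsTreeHom.append_exists {g : Equiv.Perm (V X)} (hg : IsTreeHom g) (u : V X) :
    ∀ w : V X, ∃ w', g (u ++ w) = g u ++ w' := by
  intro w
  induction w using List.reverseRecOn with
  | nil => exact ⟨[], by simp⟩
  | append_singleton w a ih =>
      obtain ⟨w', hw'⟩ := ih
      obtain ⟨b, hb⟩ := hg.2 (u ++ w) a
      exact ⟨w' ++ [b], by rw [← List.append_assoc, hb, hw', List.append_assoc]⟩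

lemma IsTreeHom.prefix_drop {g : Equiv.Perm (V X)} (hg : IsTreeHom g) (u w : V X) :
    g u ++ (g (u ++ w)).drop u.length = g (u ++ w) := by
  obtain ⟨w', hw'⟩ := hg.append_exists u w
  rw [hw']
  congr 1
  rw [← hg.length_apply u, List.drop_left]

/-- The section of `g` at `u`, as a permutation. -/
def secE (g : Equiv.Perm (V X)) (hg : g ∈ AutT X) (u : V X) : Equiv.Perm (V X) where
  toFun w := (g (u ++ w)).drop u.length
  invFun w := (g⁻¹ (g u ++ w)).drop u.length
  left_inv w := by
    show (g⁻¹ (g u ++ (g (u ++ w)).drop u.length)).drop u.length = w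
    rw [hg.1.prefix_drop u w, (by exact Equiv.symm_apply_apply g (u ++ w) : g⁻¹ (g (u ++ w)) = u ++ w), List.drop_left]
  right_inv w := by
    show (g (u ++ (g⁻¹ (g u ++ w)).drop u.length)).drop u.length = w
    have hl : (g u).length = u.length := hg.1.length_apply u
    have h3 : u ++ (g⁻¹ (g u ++ w)).drop u.length = g⁻¹ (g u ++ w) := by
      have := hg.2.prefix_drop (g u) w
      rwa [(by exact Equiv.symm_apply_apply g u : g⁻¹ (g u) = u), hl] at this
    rw [h3, (by exact Equiv.apply_symm_apply g (g u ++ w) : g (g⁻¹ (g u ++ w)) = g u ++ w), ← hl, List.drop_left]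

lemma secE_apply (g : Equiv.Perm (V X)) (hg : g ∈ AutT X) (u w : V X) :
    secE g hg u w = (g (u ++ w)).drop u.length := rfl

lemma secE_isTreeHom (g : Equiv.Perm (V X)) (hg : g ∈ AutT X) (u : V X) :
    IsTreeHom (secE g hg u) := by
  constructor
  · show (g (u ++ [])).drop u.length = []
    rw [List.append_nil, ← hg.1.length_apply u, List.drop_length]
  · intro v a
    obtain ⟨b, hb⟩ := hg.1.2 (u ++ v) a
    refine ⟨b, ?_⟩
    show (g (u ++ (v ++ [a]))).drop u.length = (g (u ++ v)).drop u.length ++ [b]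
    rw [← List.append_assoc, hb, List.drop_append_of_le_length]
    rw [hg.1.length_apply]
    simp

lemma secE_inv (g : Equiv.Perm (V X)) (hg : g ∈ AutT X) (u : V X) :
    (secE g hg u)⁻¹ = secE g⁻¹ ((AutT X).inv_mem hg) (g u) := by
  apply Equiv.ext
  intro w
  show (g⁻¹ (g u ++ w)).drop u.length = (g⁻¹ (g u ++ w)).drop (g u).length
  rw [hg.1.length_apply u]

lemma secE_mem_AutT (g : Equiv.Perm (V X)) (hg : g ∈ AutT X) (u : V X) :
    secE g hg u ∈ AutT X := by
  refine ⟨secE_isTreeHom g hg u, ?_⟩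
  rw [secE_inv]
  exact secE_isTreeHom _ _ _

lemma secE_hasLabel (g : Equiv.Perm (V X)) (hg : g ∈ AutT X) (u v : V X)
    (σ : Equiv.Perm X) (h : HasLabel g (u ++ v) σ) : HasLabel (secE g hg u) v σ := by
  intro a
  show (g (u ++ (v ++ [a]))).drop u.length = (g (u ++ v)).drop u.length ++ [σ a]
  rw [← List.append_assoc, h a, List.drop_append_of_le_length]
  rw [hg.1.length_apply]
  simp

lemma secE_mem_WS {S : Set (Equiv.Perm X)} {g : Equiv.Perm (V X)} (hg : g ∈ WS S) (u : V X) :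
    secE g hg.1 u ∈ WS S := by
  refine ⟨secE_mem_AutT g hg.1 u, fun v => ?_⟩
  obtain ⟨σ, hσS, hσ⟩ := hg.2 (u ++ v)
  exact ⟨σ, hσS, secE_hasLabel g hg.1 u v σ hσ⟩

/-- The wreath recursion: root permutation `σ` and first-level sections `f`. -/
def wr (σ : Equiv.Perm X) (f : X → Equiv.Perm (V X)) : Equiv.Perm (V X) where
  toFun v := match v with
    | [] => []
    | a :: w => σ a :: f a w
  invFun v := match v with
    | [] => []
    | b :: w => σ.symm b :: (f (σ.symm b)).symm w
  left_inv v := by cases v with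
    | nil => rfl
    | cons a w => simp
  right_inv v := by cases v with
    | nil => rfl
    | cons b w => simp

@[simp] lemma wr_nil (σ : Equiv.Perm X) (f : X → Equiv.Perm (V X)) : wr σ f [] = [] := rfl

@[simp] lemma wr_cons (σ : Equiv.Perm X) (f : X → Equiv.Perm (V X)) (a : X) (w : V X) :
    wr σ f (a :: w) = σ a :: f a w := rfl

lemma wr_inv (σ : Equiv.Perm X) (f : X → Equiv.Perm (V X)) :
    (wr σ f)⁻¹ = wr σ⁻¹ (fun b => (f (σ⁻¹ b))⁻¹) := by
  apply Equiv.ext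
  intro v
  cases v <;> rfl

lemma wr_isTreeHom {σ : Equiv.Perm X} {f : X → Equiv.Perm (V X)}
    (hf : ∀ a, IsTreeHom (f a)) : IsTreeHom (wr σ f) := by
  refine ⟨rfl, ?_⟩
  intro v a
  cases v with
  | nil => exact ⟨σ a, by simp [(hf a).1]⟩
  | cons x v' =>
      obtain ⟨b, hb⟩ := (hf x).2 v' a
      exact ⟨b, by simp [hb]⟩

lemma wr_mem_AutT {σ : Equiv.Perm X} {f : X → Equiv.Perm (V X)}
    (hf : ∀ a, f a ∈ AutT X) : wr σ f ∈ AutT X := by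
  refine ⟨wr_isTreeHom fun a => (hf a).1, ?_⟩
  rw [wr_inv]
  exact wr_isTreeHom fun b => (hf (σ⁻¹ b)).2

lemma wr_mem_WS {S : Set (Equiv.Perm X)} {σ : Equiv.Perm X} {f : X → Equiv.Perm (V X)}
    (hσ : σ ∈ S) (hf : ∀ a, f a ∈ WS S) : wr σ f ∈ WS S := by
  refine ⟨wr_mem_AutT fun a => (hf a).1, ?_⟩
  intro v
  cases v with
  | nil =>
      refine ⟨σ, hσ, fun a => ?_⟩
      simp [((hf a).1).1.1]
  | cons x v' =>
      obtain ⟨τ, hτS, hτ⟩ := (hf x).2 v'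
      refine ⟨τ, hτS, fun a => ?_⟩
      simp [hτ a]

lemma hasLabel_nil {g : Equiv.Perm (V X)} (hg : IsTreeHom g) {σ : Equiv.Perm X}
    (h : HasLabel g [] σ) (a : X) : g [a] = [σ a] := by
  have := h a
  simpa [hg.1] using this

/-- Decomposition of an element of `W_S` into wreath form. -/
lemma WS_decomp {S : Set (Equiv.Perm X)} {g : Equiv.Perm (V X)} (hg : g ∈ WS S) :
    ∃ σ ∈ S, ∃ f : X → Equiv.Perm (V X), (∀ a, f a ∈ WS S) ∧ g = wr σ f := by
  obtain ⟨σ, hσS, hσ⟩ := hg.2 []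
  refine ⟨σ, hσS, fun a => secE g hg.1 [a], fun a => secE_mem_WS hg [a], ?_⟩
  apply Equiv.ext
  intro v
  cases v with
  | nil => simpa using hg.1.1.1
  | cons a w =>
      rw [wr_cons, secE_apply]
      have h2 : g [a] = [σ a] := hasLabel_nil hg.1.1 hσ a
      have h1 := hg.1.1.prefix_drop [a] w
      rw [h2] at h1
      exact h1.symm

/-- The letterwise permutation: a canonical element of `W_S` given `σ ∈ S`. -/
def mapPerm (σ : Equiv.Perm X) : Equiv.Perm (V X) where
  toFun v := v.map σ
  invFun v := v.map σ.symm
  left_inv v := by simp [List.map_map]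
  right_inv v := by simp [List.map_map]

lemma mapPerm_mem_WS {S : Set (Equiv.Perm X)} {σ : Equiv.Perm X} (hσ : σ ∈ S) :
    mapPerm σ ∈ WS S := by
  have h1 : IsTreeHom (mapPerm σ) := by
    refine ⟨rfl, fun v a => ⟨σ a, ?_⟩⟩
    show (v ++ [a]).map σ = v.map σ ++ [σ a]
    simp
  have h2 : (mapPerm σ)⁻¹ = mapPerm σ⁻¹ := by
    apply Equiv.ext
    intro v
    rfl
  refine ⟨⟨h1, ?_⟩, fun v => ⟨σ, hσ, fun a => ?_⟩⟩
  · rw [h2]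
    refine ⟨rfl, fun v a => ⟨σ⁻¹ a, ?_⟩⟩
    show (v ++ [a]).map ⇑(σ⁻¹) = v.map ⇑(σ⁻¹) ++ [σ⁻¹ a]
    simp
  · show (v ++ [a]).map σ = v.map σ ++ [σ a]
    simp

/-- Building a level-`(n+1)` function from a root permutation and level-`n` functions. -/
def Phi (n : ℕ) (σ : Equiv.Perm X) (F : X → ({v : V X // v.length = n} → V X)) :
    {v : V X // v.length = n + 1} → V X
  | ⟨[], _⟩ => []
  | ⟨a :: w, h⟩ => σ a :: F a ⟨w, by simpa using h⟩

lemma Phi_cons (n : ℕ) (σ : Equiv.Perm X) (F : X → ({v : V X // v.length = n} → V X))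
    (a : X) (w : V X) (h : (a :: w).length = n + 1) :
    Phi n σ F ⟨a :: w, h⟩ = σ a :: F a ⟨w, by simpa using h⟩ := rfl

lemma Phi_injective (n : ℕ) :
    Function.Injective (fun p : Equiv.Perm X × (X → ({v : V X // v.length = n} → V X)) =>
      Phi n p.1 p.2) := by
  rintro ⟨σ, F⟩ ⟨σ', F'⟩ h
  simp only at h
  have key : ∀ (a : X) (w : V X) (hw : w.length = n),
      σ a = σ' a ∧ F a ⟨w, hw⟩ = F' a ⟨w, hw⟩ := by
    intro a w hw
    have h2 := congrFun h ⟨a :: w, by simp [hw]⟩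
    rw [Phi_cons, Phi_cons] at h2
    exact ⟨(List.cons.injEq _ _ _ _ ▸ h2).1, (List.cons.injEq _ _ _ _ ▸ h2).2⟩
  have hσ : σ = σ' := Equiv.ext fun a => (key a (List.replicate n a) (by simp)).1
  have hF : F = F' := by
    funext a v
    obtain ⟨w, hw⟩ := v
    exact (key a w hw).2
  rw [Prod.mk.injEq]
  exact ⟨hσ, hF⟩

lemma res_wr (n : ℕ) (σ : Equiv.Perm X) (f : X → Equiv.Perm (V X)) :
    res (n + 1) (wr σ f) = Phi n σ (fun a => res n (f a)) := by
  funext v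
  obtain ⟨l, hl⟩ := v
  cases l with
  | nil => simp at hl
  | cons a w => rfl

lemma piSet_WS_succ (S : Set (Equiv.Perm X)) (n : ℕ) :
    piSet (WS S) (n + 1) =
      (fun p : Equiv.Perm X × (X → ({v : V X // v.length = n} → V X)) =>
        Phi n p.1 p.2) ''
        {p | p.1 ∈ S ∧ ∀ a, p.2 a ∈ piSet (WS S) n} := by
  ext F
  constructor
  · rintro ⟨g, hgW, rfl⟩
    obtain ⟨σ, hσS, f, hfW, rfl⟩ := WS_decomp hgW
    exact ⟨⟨σ, fun a => res n (f a)⟩, ⟨hσS, fun a => ⟨f a, hfW a, rfl⟩⟩, (res_wr n σ f).symm⟩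
  · rintro ⟨⟨σ, Fs⟩, ⟨hσS, hFs⟩, rfl⟩
    choose f hfW hf using hFs
    refine ⟨wr σ f, wr_mem_WS hσS hfW, ?_⟩
    rw [res_wr]
    show Phi n σ (fun a => res n (f a)) = Phi n σ Fs
    rw [show (fun a => res n (f a)) = Fs from funext hf]

lemma fixSet_WS_succ (S : Set (Equiv.Perm X)) (n : ℕ) :
    fixSet (WS S) (n + 1) =
      (fun p : Equiv.Perm X × (X → ({v : V X // v.length = n} → V X)) =>
        Phi n p.1 p.2) ''
        {p | p.1 ∈ S ∧ ((∀ a, p.2 a ∈ piSet (WS S) n) ∧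
          ∃ a, p.1 a = a ∧ ∃ v : {v : V X // v.length = n}, p.2 a v = v.1)} := by
  ext F
  constructor
  · rintro ⟨hpi, v, hv⟩
    rw [piSet_WS_succ] at hpi
    obtain ⟨⟨σ, Fs⟩, ⟨hσS, hFs⟩, rfl⟩ := hpi
    obtain ⟨l, hl⟩ := v
    cases l with
    | nil => simp at hl
    | cons a w =>
        simp only at hv
        rw [Phi_cons] at hv
        have ha : σ a = a := (List.cons.injEq _ _ _ _ ▸ hv).1
        have hw : Fs a ⟨w, by simpa using hl⟩ = w := (List.cons.injEq _ _ _ _ ▸ hv).2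
        exact ⟨⟨σ, Fs⟩, ⟨hσS, hFs, a, ha, ⟨w, by simpa using hl⟩, hw⟩, rfl⟩
  · rintro ⟨⟨σ, Fs⟩, ⟨hσS, hFs, a, ha, ⟨⟨w, hw⟩, hfix⟩⟩, rfl⟩
    constructor
    · rw [piSet_WS_succ]
      exact ⟨⟨σ, Fs⟩, ⟨hσS, hFs⟩, rfl⟩
    · refine ⟨⟨a :: w, by simp [hw]⟩, ?_⟩
      show Phi n σ Fs ⟨a :: w, by simp [hw]⟩ = a :: w
      rw [Phi_cons]
      show σ a :: Fs a ⟨w, hw⟩ = a :: w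
      rw [ha]
      exact congrArg _ hfix

/-- Counting a "dependent product" set fibered over a finset. -/
lemma ncard_dep {α β : Type*} (s : Finset α) (t : α → Set β) (ht : ∀ σ ∈ s, (t σ).Finite) :
    {p : α × β | p.1 ∈ (s : Set α) ∧ p.2 ∈ t p.1}.ncard = ∑ σ ∈ s, (t σ).ncard := by
  classical
  induction s using Finset.induction_on with
  | empty => simp
  | @insert a s ha ih =>
      have hsub : {p : α × β | p.1 ∈ (↑(insert a s) : Set α) ∧ p.2 ∈ t p.1}
          = (Prod.mk a '' t a) ∪ {p : α × β | p.1 ∈ (s : Set α) ∧ p.2 ∈ t p.1} := by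
        ext ⟨x, y⟩
        simp only [Set.mem_union, Set.mem_setOf_eq, Set.mem_image, Finset.coe_insert,
          Set.mem_insert_iff, Finset.mem_coe, Prod.mk.injEq]
        constructor
        · rintro ⟨hx | hx, hy⟩
          · exact Or.inl ⟨y, hx ▸ hy, hx.symm, rfl⟩
          · exact Or.inr ⟨hx, hy⟩
        · rintro (⟨z, hz, rfl, rfl⟩ | ⟨hx, hy⟩)
          · exact ⟨Or.inl rfl, hz⟩
          · exact ⟨Or.inr hx, hy⟩
      have hfin1 : (Prod.mk a '' t a).Finite :=
        (ht a (Finset.mem_insert_self a s)).image _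
      have hfin2 : {p : α × β | p.1 ∈ (s : Set α) ∧ p.2 ∈ t p.1}.Finite := by
        apply Set.Finite.subset (Set.Finite.prod s.finite_toSet
          (Set.Finite.biUnion s.finite_toSet
            (fun σ hσ => ht σ (Finset.mem_insert_of_mem hσ))))
        rintro ⟨x, y⟩ ⟨hx, hy⟩
        exact ⟨hx, Set.mem_biUnion hx hy⟩
      have hdisj : Disjoint (Prod.mk a '' t a)
          {p : α × β | p.1 ∈ (s : Set α) ∧ p.2 ∈ t p.1} := by
        rw [Set.disjoint_left]
        rintro ⟨x, y⟩ ⟨z, _, rfl, rfl⟩ ⟨hx, _⟩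
        exact ha hx
      rw [hsub, Set.ncard_union_eq hdisj hfin1 hfin2,
        Set.ncard_image_of_injective _ (Prod.mk_right_injective a),
        ih (fun σ hσ => ht σ (Finset.mem_insert_of_mem hσ)),
        Finset.sum_insert ha]

/-- Counting a set of functions with constrained values. -/
lemma ncard_pifun {ι β : Type*} [Fintype ι] (C : ι → Set β) :
    {F : ι → β | ∀ i, F i ∈ C i}.ncard = ∏ i, (C i).ncard := by
  have h : {F : ι → β | ∀ i, F i ∈ C i} = Set.univ.pi C := by
    ext F
    simp [Set.mem_pi]
  rw [h, ← Nat.card_coe_set_eq, Nat.card_congr (Equiv.Set.univPi C), Nat.card_pi]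
  exact Finset.prod_congr rfl fun i _ => Nat.card_coe_set_eq (C i)

end Aux

/-- the recurrence for the number `f_n` of elements of `π_n(W_S)` fixing a
vertex of level `n`, the recurrence `p_{n+1} = f_S(p_n)`, and that any limit of `(p_n)`
is a fixed point of the characteristic polynomial `f_S`. -/
theorem stmt3 (d : ℕ) (hd : 2 ≤ d) (S : Finset (Equiv.Perm (Fin d))) (hS : S.Nonempty) :
    (∀ n : ℕ, 1 ≤ n →
      (((fixSet (WS (S : Set (Equiv.Perm (Fin d)))) (n + 1)).ncard : ℝ) =
        ∑ k ∈ Finset.Icc 1 d, (DS S k : ℝ) *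
          ((piSet (WS (S : Set (Equiv.Perm (Fin d)))) n).ncard : ℝ) ^ (d - k) *
          (((piSet (WS (S : Set (Equiv.Perm (Fin d)))) n).ncard : ℝ) ^ k -
            (((piSet (WS (S : Set (Equiv.Perm (Fin d)))) n).ncard : ℝ) -
              ((fixSet (WS (S : Set (Equiv.Perm (Fin d)))) n).ncard : ℝ)) ^ k)) ∧
      FPPseq (WS (S : Set (Equiv.Perm (Fin d)))) (n + 1) =
        (charPoly S).eval (FPPseq (WS (S : Set (Equiv.Perm (Fin d)))) n)) ∧
    ∀ L : ℝ,
      Filter.Tendsto (FPPseq (WS (S : Set (Equiv.Perm (Fin d))))) Filter.atTop (nhds L) →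
      (charPoly S).eval L = L := by
  classical
  have hd0 : Fintype.card (Fin d) = d := Fintype.card_fin d
  obtain ⟨σ₀, hσ₀⟩ := hS
  set W : Set (Equiv.Perm (V (Fin d))) := WS (S : Set (Equiv.Perm (Fin d))) with hWdef
  -- finiteness of the level sets
  have hpifin : ∀ (n : ℕ) (C : Fin d → Set ({v : V (Fin d) // v.length = n} → V (Fin d))),
      (∀ a, (C a).Finite) → {F : Fin d → _ | ∀ a, F a ∈ C a}.Finite := by
    intro n C hC
    have h : {F : Fin d → _ | ∀ a, F a ∈ C a} = Set.univ.pi C := by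
      ext F
      simp [Set.mem_pi]
    rw [h]
    exact Set.Finite.pi hC
  have hAfin : ∀ n, (piSet W n).Finite := by
    intro n
    induction n with
    | zero =>
        apply Set.Finite.subset (Set.finite_singleton (fun _ => ([] : V (Fin d))))
        rintro f ⟨g, hg, rfl⟩
        simp only [Set.mem_singleton_iff]
        funext v
        show g v.1 = []
        rw [List.length_eq_zero_iff.mp v.2, hg.1.1.1]
    | succ n ih =>
        rw [hWdef, piSet_WS_succ]
        apply Set.Finite.image
        apply Set.Finite.subset ((S.finite_toSet).prod (hpifin n _ (fun _ => ih)))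
        rintro ⟨σ, Fs⟩ ⟨h1, h2⟩
        exact Set.mem_prod.mpr ⟨h1, h2⟩
  have hAne : ∀ n, (piSet W n).Nonempty := fun n =>
    ⟨res n (mapPerm σ₀), ⟨mapPerm σ₀, mapPerm_mem_WS hσ₀, rfl⟩⟩
  have hsc_pos : ∀ n, 0 < (piSet W n).ncard := fun n =>
    (Set.ncard_pos (hAfin n)).mpr (hAne n)
  have hBsub : ∀ n, fixSet W n ⊆ piSet W n := fun n f hf => hf.1
  have hBfin : ∀ n, (fixSet W n).Finite := fun n => (hAfin n).subset (hBsub n)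
  have hfc_le : ∀ n, (fixSet W n).ncard ≤ (piSet W n).ncard := fun n =>
    Set.ncard_le_ncard (hBsub n) (hAfin n)
  -- the cardinality of π_{n+1}
  have hsigma : ∀ n, (piSet W (n + 1)).ncard = S.card * (piSet W n).ncard ^ d := by
    intro n
    rw [hWdef, piSet_WS_succ, Set.ncard_image_of_injective _ (Phi_injective n)]
    have h1 := ncard_dep S
      (fun _ : Equiv.Perm (Fin d) =>
        {F : Fin d → _ | ∀ a, F a ∈ piSet W n})
      (fun σ _ => hpifin n _ (fun _ => hAfin n))
    refine Eq.trans h1 ?_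
    rw [Finset.sum_congr rfl (fun σ _ => ncard_pifun (fun _ : Fin d => piSet W n))]
    simp [Finset.prod_const, hd0, mul_comm, hWdef]
  -- the number of fixed points of σ
  have hk_le : ∀ σ : Equiv.Perm (Fin d),
      (Finset.univ.filter fun x => σ x = x).card ≤ d := by
    intro σ
    calc (Finset.univ.filter fun x => σ x = x).card ≤ Finset.univ.card :=
          Finset.card_filter_le _ _
      _ = d := by rw [Finset.card_univ, hd0]
  -- the count of each fiber
  have hTcount : ∀ (n : ℕ) (σ : Equiv.Perm (Fin d)),
      {F : Fin d → ({v : V (Fin d) // v.length = n} → V (Fin d)) |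
        (∀ a, F a ∈ piSet W n) ∧
          ∃ a, σ a = a ∧ ∃ v : {v : V (Fin d) // v.length = n}, F a v = v.1}.ncard =
      (piSet W n).ncard ^ d -
        ((piSet W n).ncard - (fixSet W n).ncard) ^
            ((Finset.univ.filter fun x => σ x = x).card) *
          (piSet W n).ncard ^ (d - (Finset.univ.filter fun x => σ x = x).card) := by
    intro n σ
    have hPN : {F : Fin d → ({v : V (Fin d) // v.length = n} → V (Fin d)) |
        (∀ a, F a ∈ piSet W n) ∧
          ∃ a, σ a = a ∧ ∃ v : {v : V (Fin d) // v.length = n}, F a v = v.1}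
        = {F | ∀ a, F a ∈ piSet W n} \
          {F | ∀ a, F a ∈ (if σ a = a then piSet W n \ fixSet W n else piSet W n)} := by
      ext F
      simp only [Set.mem_setOf_eq, Set.mem_diff]
      constructor
      · rintro ⟨hP, a, ha, v, hv⟩
        refine ⟨hP, fun hN => ?_⟩
        have := hN a
        rw [if_pos ha] at this
        exact this.2 ⟨hP a, v, hv⟩
      · rintro ⟨hP, hN⟩
        refine ⟨hP, ?_⟩
        by_contra hcon
        push_neg at hcon
        apply hN
        intro a
        by_cases ha : σ a = a
        · rw [if_pos ha]
          refine ⟨hP a, fun hB => ?_⟩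
          obtain ⟨_, v, hv⟩ := hB
          exact hcon a ha v hv
        · rw [if_neg ha]
          exact hP a
    have hNsubP : {F : Fin d → ({v : V (Fin d) // v.length = n} → V (Fin d)) |
          ∀ a, F a ∈ (if σ a = a then piSet W n \ fixSet W n else piSet W n)}
        ⊆ {F | ∀ a, F a ∈ piSet W n} := by
      intro F hF a
      have := hF a
      by_cases ha : σ a = a
      · rw [if_pos ha] at this
        exact this.1
      · rwa [if_neg ha] at this
    rw [hPN, Set.ncard_diff hNsubP ((hpifin n _ (fun _ => hAfin n)).subset hNsubP)]
    rw [ncard_pifun (fun _ : Fin d => piSet W n), ncard_pifun]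
    congr 1
    · simp [Finset.prod_const, hd0]
    · have hite : ∀ a : Fin d,
          ((if σ a = a then piSet W n \ fixSet W n else piSet W n)).ncard
          = if σ a = a then (piSet W n).ncard - (fixSet W n).ncard
            else (piSet W n).ncard := by
        intro a
        by_cases ha : σ a = a
        · rw [if_pos ha, if_pos ha, Set.ncard_diff (hBsub n) (hBfin n)]
        · rw [if_neg ha, if_neg ha]
      rw [Finset.prod_congr rfl (fun a _ => hite a), Finset.prod_ite, Finset.prod_const,
        Finset.prod_const]
      congr 2
      have := Finset.card_filter_add_card_filter_not
        (s := Finset.univ) (p := fun x : Fin d => σ x = x)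
      rw [Finset.card_univ, hd0] at this
      omega
  -- the natural-number recurrence for f_{n+1}, grouped over S
  have hfixN : ∀ n, (fixSet W (n + 1)).ncard =
      ∑ σ ∈ S, ((piSet W n).ncard ^ d -
        ((piSet W n).ncard - (fixSet W n).ncard) ^
            ((Finset.univ.filter fun x => σ x = x).card) *
          (piSet W n).ncard ^ (d - (Finset.univ.filter fun x => σ x = x).card)) := by
    intro n
    rw [hWdef, fixSet_WS_succ, Set.ncard_image_of_injective _ (Phi_injective n)]
    have h1 := ncard_dep S
      (fun σ : Equiv.Perm (Fin d) =>
        {F : Fin d → ({v : V (Fin d) // v.length = n} → V (Fin d)) |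
          (∀ a, F a ∈ piSet W n) ∧
            ∃ a, σ a = a ∧ ∃ v : {v : V (Fin d) // v.length = n}, F a v = v.1})
      (fun σ _ => ((hpifin n _ (fun _ => hAfin n)).subset (fun F hF => hF.1)))
    refine Eq.trans h1 ?_
    exact Finset.sum_congr rfl fun σ _ => hTcount n σ
  -- grouping over k
  have hgroup : ∀ n, (fixSet W (n + 1)).ncard =
      ∑ k ∈ Finset.Icc 1 d, DS S k * ((piSet W n).ncard ^ d -
        ((piSet W n).ncard - (fixSet W n).ncard) ^ k * (piSet W n).ncard ^ (d - k)) := by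
    intro n
    rw [hfixN n]
    rw [← Finset.sum_fiberwise_of_maps_to
      (g := fun σ : Equiv.Perm (Fin d) => (Finset.univ.filter fun x => σ x = x).card)
      (t := Finset.Icc 0 d) (fun σ _ => Finset.mem_Icc.mpr ⟨Nat.zero_le _, hk_le σ⟩)]
    have hIcc : Finset.Icc 0 d = insert 0 (Finset.Icc 1 d) := by
      ext k
      simp only [Finset.mem_Icc, Finset.mem_insert]
      omega
    rw [hIcc, Finset.sum_insert (by simp)]
    have hzero : ∑ σ ∈ S.filter
          (fun σ => (Finset.univ.filter fun x => σ x = x).card = 0),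
        ((piSet W n).ncard ^ d -
          ((piSet W n).ncard - (fixSet W n).ncard) ^
              ((Finset.univ.filter fun x => σ x = x).card) *
            (piSet W n).ncard ^ (d - (Finset.univ.filter fun x => σ x = x).card)) = 0 := by
      apply Finset.sum_eq_zero
      intro σ hσ
      rw [Finset.mem_filter] at hσ
      rw [hσ.2]
      simp
    rw [hzero, zero_add]
    apply Finset.sum_congr rfl
    intro k _
    have hbody : ∀ σ ∈ S.filter
          (fun σ : Equiv.Perm (Fin d) => (Finset.univ.filter fun x => σ x = x).card = k),
        ((piSet W n).ncard ^ d -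
          ((piSet W n).ncard - (fixSet W n).ncard) ^
              ((Finset.univ.filter fun x => σ x = x).card) *
            (piSet W n).ncard ^ (d - (Finset.univ.filter fun x => σ x = x).card)) =
        ((piSet W n).ncard ^ d -
          ((piSet W n).ncard - (fixSet W n).ncard) ^ k * (piSet W n).ncard ^ (d - k)) := by
      intro σ hσ
      rw [(Finset.mem_filter.mp hσ).2]
    refine (Finset.sum_congr rfl hbody).trans ?_
    rw [Finset.sum_const, DS, smul_eq_mul]
  -- the real recurrence for f_{n+1} (part 1)
  have hfixrec : ∀ n : ℕ, (((fixSet W (n + 1)).ncard : ℝ) =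
      ∑ k ∈ Finset.Icc 1 d, (DS S k : ℝ) *
        ((piSet W n).ncard : ℝ) ^ (d - k) *
        (((piSet W n).ncard : ℝ) ^ k -
          (((piSet W n).ncard : ℝ) - ((fixSet W n).ncard : ℝ)) ^ k)) := by
    intro n
    rw [hgroup n]
    push_cast
    apply Finset.sum_congr rfl
    intro k hk
    obtain ⟨hk1, hk2⟩ := Finset.mem_Icc.mp hk
    have hsub_le : ((piSet W n).ncard - (fixSet W n).ncard) ^ k *
        (piSet W n).ncard ^ (d - k) ≤ (piSet W n).ncard ^ d := by
      calc ((piSet W n).ncard - (fixSet W n).ncard) ^ k * (piSet W n).ncard ^ (d - k)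
          ≤ (piSet W n).ncard ^ k * (piSet W n).ncard ^ (d - k) :=
            Nat.mul_le_mul_right _ (Nat.pow_le_pow_left (Nat.sub_le _ _) k)
        _ = (piSet W n).ncard ^ d := by
            rw [← pow_add]
            congr 1
            omega
    rw [Nat.cast_sub hsub_le]
    push_cast [Nat.cast_sub (hfc_le n)]
    have hpowd : ((piSet W n).ncard : ℝ) ^ d =
        ((piSet W n).ncard : ℝ) ^ (d - k) * ((piSet W n).ncard : ℝ) ^ k := by
      rw [← pow_add]
      congr 1
      omega
    rw [hpowd]
    ring
  -- the recurrence p_{n+1} = f_S(p_n) (part 2)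
  have heval : ∀ p : ℝ, (charPoly S).eval p =
      ∑ k ∈ Finset.Icc 1 d, ((DS S k : ℝ) / (S.card : ℝ)) * (1 - (1 - p) ^ k) := by
    intro p
    rw [charPoly, Polynomial.eval_finset_sum]
    apply Finset.sum_congr rfl
    intro k _
    simp
  have hcardS : (0 : ℝ) < (S.card : ℝ) := by
    have : 0 < S.card := Finset.card_pos.mpr ⟨σ₀, hσ₀⟩
    exact_mod_cast this
  have hrec2 : ∀ n : ℕ, FPPseq W (n + 1) = (charPoly S).eval (FPPseq W n) := by
    intro n
    have ha : (0 : ℝ) < ((piSet W n).ncard : ℝ) := by exact_mod_cast hsc_pos n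
    rw [FPPseq, hfixrec n, heval, hsigma n]
    push_cast
    rw [Finset.sum_div]
    apply Finset.sum_congr rfl
    intro k hk
    obtain ⟨hk1, hk2⟩ := Finset.mem_Icc.mp hk
    have h1 : (1 : ℝ) - FPPseq W n =
        (((piSet W n).ncard : ℝ) - ((fixSet W n).ncard : ℝ)) / ((piSet W n).ncard : ℝ) := by
      rw [FPPseq]
      field_simp
    rw [h1, div_pow]
    have hpowd : ((piSet W n).ncard : ℝ) ^ d =
        ((piSet W n).ncard : ℝ) ^ (d - k) * ((piSet W n).ncard : ℝ) ^ k := by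
      rw [← pow_add]
      congr 1
      omega
    rw [hpowd]
    field_simp
  refine ⟨fun n _ => ⟨hfixrec n, hrec2 n⟩, ?_⟩
  intro L hL
  have h1 : Filter.Tendsto (fun n => FPPseq W (n + 1)) Filter.atTop (nhds L) :=
    hL.comp (Filter.tendsto_add_atTop_nat 1)
  have h2 : Filter.Tendsto (fun n => (charPoly S).eval (FPPseq W n)) Filter.atTop
      (nhds ((charPoly S).eval L)) :=
    ((charPoly S).continuous.tendsto L).comp hL
  have h3 : (fun n => FPPseq W (n + 1)) = fun n => (charPoly S).eval (FPPseq W n) :=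
    funext fun n => hrec2 n
  rw [h3] at h1
  exact (tendsto_nhds_unique h1 h2).symm


end TreePaper
end

section
/- Let d ≥ 1, let S ⊆ Sym(d) be nonempty and let f_S : [0,1] → ℝ be the characteristic polynomial of S. If f_S is not the identity function on [0,1], then the equation f_S(x) = x has at most two solutions in [0,1], and x = 0 is one of them. -/
open Filter Polynomial

namespace TreePaper

variable {X : Type*}

lemma charPoly_eval {d : ℕ} (S : Finset (Equiv.Perm (Fin d))) (x : ℝ) :
    (charPoly S).eval x
      = ∑ k ∈ Finset.Icc 1 d, ((DS S k : ℝ) / (S.card : ℝ)) * (1 - (1 - x) ^ k) := by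
  simp [charPoly, eval_finset_sum]

lemma charPoly_eval_zero {d : ℕ} (S : Finset (Equiv.Perm (Fin d))) :
    (charPoly S).eval 0 = 0 := by
  simp [charPoly_eval]


lemma convexOn_one_sub_pow (k : ℕ) :
    ConvexOn ℝ (Set.Icc (0:ℝ) 1) (fun x => (1 - x) ^ k) := by
  have h := (convexOn_pow (𝕜 := ℝ) k).comp_affineMap (AffineMap.lineMap (1:ℝ) (0:ℝ))
  have h2 := h.subset (s := Set.Icc (0:ℝ) 1) ?_ (convex_Icc 0 1)
  · refine h2.congr fun x _ => ?_
    simp [AffineMap.lineMap_apply]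
    ring
  · intro x hx
    simp only [Set.mem_preimage, AffineMap.lineMap_apply, Set.mem_Ici]
    simp only [Set.mem_Icc] at hx
    have : (0:ℝ) - 1 = -1 := by ring
    simp [this]
    nlinarith [hx.2]

lemma concaveOn_finsum {ι : Type*} (t : Finset ι) (f : ι → ℝ → ℝ)
    (hf : ∀ i ∈ t, ConcaveOn ℝ (Set.Icc (0:ℝ) 1) (f i)) :
    ConcaveOn ℝ (Set.Icc (0:ℝ) 1) (fun x => ∑ i ∈ t, f i x) := by
  induction t using Finset.cons_induction with
  | empty => simpa using concaveOn_const (0:ℝ) (convex_Icc (0:ℝ) 1)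
  | cons i s his ih =>
    simp only [Finset.sum_cons]
    exact (hf i (Finset.mem_cons_self _ _)).add (ih fun j hj => hf j (Finset.mem_cons_of_mem hj))

lemma chord {g : ℝ → ℝ} (hg : ConcaveOn ℝ (Set.Icc (0:ℝ) 1) g)
    {u v w : ℝ} (hu : u ∈ Set.Icc (0:ℝ) 1) (hw : w ∈ Set.Icc (0:ℝ) 1)
    (huv : u < v) (hvw : v < w) :
    (w - v)/(w - u) * g u + (v - u)/(w - u) * g w ≤ g v := by
  have huw : u < w := huv.trans hvw
  have hne : w - u ≠ 0 := by linarith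
  have ht : (0:ℝ) ≤ (w - v)/(w - u) := div_nonneg (by linarith) (by linarith)
  have hs : (0:ℝ) ≤ (v - u)/(w - u) := div_nonneg (by linarith) (by linarith)
  have hts : (w - v)/(w - u) + (v - u)/(w - u) = 1 := by
    rw [← add_div]; rw [show w - v + (v - u) = w - u by ring, div_self hne]
  have h := hg.2 hu hw ht hs hts
  have hv : ((w - v)/(w - u)) • u + ((v - u)/(w - u)) • w = v := by
    simp only [smul_eq_mul]
    field_simp
    ring
  rw [hv] at h
  simpa [smul_eq_mul] using h

lemma concave_g {d : ℕ} (S : Finset (Equiv.Perm (Fin d))) :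
    ConcaveOn ℝ (Set.Icc (0:ℝ) 1) (fun x => (charPoly S).eval x - x) := by
  have h1 : ConcaveOn ℝ (Set.Icc (0:ℝ) 1)
      (fun x => ∑ k ∈ Finset.Icc 1 d, ((DS S k : ℝ) / (S.card : ℝ)) * (1 - (1 - x) ^ k)) := by
    apply concaveOn_finsum
    intro k _
    have hc : (0:ℝ) ≤ (DS S k : ℝ) / (S.card : ℝ) :=
      div_nonneg (Nat.cast_nonneg _) (Nat.cast_nonneg _)
    have h := (((convexOn_one_sub_pow k).smul hc).neg).add_const ((DS S k : ℝ) / (S.card : ℝ))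
    refine h.congr fun x _ => ?_
    simp only [Pi.add_apply, Pi.neg_apply, smul_eq_mul]
    ring
  have h2 : ConcaveOn ℝ (Set.Icc (0:ℝ) 1) (fun x : ℝ => -x) :=
    (convexOn_id (convex_Icc (0:ℝ) 1)).neg
  have := h1.add h2
  refine this.congr fun x _ => ?_
  simp only [Pi.add_apply]
  rw [charPoly_eval]
  ring

lemma key {d : ℕ} (S : Finset (Equiv.Perm (Fin d)))
    (hid : ∃ x ∈ Set.Icc (0 : ℝ) 1, (charPoly S).eval x ≠ x)
    {a b c : ℝ} (ha : 0 ≤ a) (hab : a < b) (hbc : b < c) (hc : c ≤ 1)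
    (ea : (charPoly S).eval a = a) (eb : (charPoly S).eval b = b)
    (ec : (charPoly S).eval c = c) : False := by
  set g : ℝ → ℝ := fun x => (charPoly S).eval x - x with hgdef
  have hg : ConcaveOn ℝ (Set.Icc (0:ℝ) 1) g := concave_g S
  have ga : g a = 0 := by simp [hgdef, ea]
  have gb : g b = 0 := by simp [hgdef, eb]
  have gc : g c = 0 := by simp [hgdef, ec]
  have haI : a ∈ Set.Icc (0:ℝ) 1 := ⟨ha, by linarith⟩
  have hcI : c ∈ Set.Icc (0:ℝ) 1 := ⟨by linarith, hc⟩
  have hroot : ∀ x ∈ Set.Ioo a b, g x = 0 := by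
    intro x hx
    obtain ⟨hax, hxb⟩ := hx
    have hxI : x ∈ Set.Icc (0:ℝ) 1 := ⟨by linarith, by linarith⟩
    have h1 : 0 ≤ g x := by
      have := chord hg haI hcI hax (hxb.trans hbc)
      rw [ga, gc] at this
      simpa using this
    have h2 : g x ≤ 0 := by
      have := chord hg hxI hcI hxb hbc
      rw [gb, gc] at this
      have ht : 0 < (c - b)/(c - x) := div_pos (by linarith) (by linarith)
      by_contra hcon
      push_neg at hcon
      nlinarith [mul_pos ht hcon]
    linarith
  have hzero : charPoly S - Polynomial.X = 0 := by
    apply Polynomial.eq_zero_of_infinite_isRoot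
    apply Set.Infinite.mono (s := Set.Ioo a b)
    · intro x hx
      have := hroot x hx
      simp only [Set.mem_setOf_eq, Polynomial.IsRoot, Polynomial.eval_sub, Polynomial.eval_X]
      simpa [hgdef] using this
    · exact Set.Ioo_infinite hab
  obtain ⟨x, _, hx⟩ := hid
  apply hx
  have : (charPoly S - Polynomial.X).eval x = 0 := by rw [hzero]; simp
  simp only [Polynomial.eval_sub, Polynomial.eval_X, sub_eq_zero] at this
  exact this


/-- if `f_S` is not the identity function on `[0,1]`, then `f_S(x) = x`
has at most two solutions in `[0,1]`, one of which is `x = 0`. -/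

theorem stmt6 (d : ℕ) (hd : 1 ≤ d) (S : Finset (Equiv.Perm (Fin d))) (hS : S.Nonempty)
    (hid : ∃ x ∈ Set.Icc (0 : ℝ) 1, (charPoly S).eval x ≠ x) :
    (charPoly S).eval 0 = 0 ∧
    ∀ a b c : ℝ,
      a ∈ Set.Icc (0 : ℝ) 1 → (charPoly S).eval a = a →
      b ∈ Set.Icc (0 : ℝ) 1 → (charPoly S).eval b = b →
      c ∈ Set.Icc (0 : ℝ) 1 → (charPoly S).eval c = c →
      a = b ∨ a = c ∨ b = c := by
  refine ⟨charPoly_eval_zero S, ?_⟩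
  intro a b c ha ea hb eb hc ec
  by_contra h
  push_neg at h
  obtain ⟨hab', hac', hbc'⟩ := h
  rcases lt_trichotomy a b with h1 | h1 | h1
  · rcases lt_trichotomy b c with h2 | h2 | h2
    · exact key S hid ha.1 h1 h2 hc.2 ea eb ec
    · exact hbc' h2
    · rcases lt_trichotomy a c with h3 | h3 | h3
      · exact key S hid ha.1 h3 h2 hb.2 ea ec eb
      · exact hac' h3
      · exact key S hid hc.1 h3 h1 hb.2 ec ea eb
  · exact hab' h1
  · rcases lt_trichotomy a c with h2 | h2 | h2
    · exact key S hid hb.1 h1 h2 hc.2 eb ea ec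
    · exact hac' h2
    · rcases lt_trichotomy b c with h3 | h3 | h3
      · exact key S hid hb.1 h3 h2 ha.2 eb ec ea
      · exact hbc' h3
      · exact key S hid hc.1 h3 h1 ha.2 ec eb ea


end TreePaper
end

section
/- Let d ≥ 2 and let S ⊆ Sym(d) be nonempty. Then FPP(W_S) = 0 if and only if f_S'(0) ≤ 1 and f_S is not the identity function, where f_S is the characteristic polynomial of S. (Equivalently, since f_S'(0) = (1/#S)·Σ_{s∈S} #{x ∈ {1,…,d} : s(x) = x}, FPP(W_S) = 0 iff the average number of fixed points of elements of S is at most 1 and f_S ≠ id.) -/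
open Filter Polynomial

namespace TreePaper

variable {X : Type*}

section LabelPerm

variable {X : Type*}

/-- Apply a labeling to a word. -/
def applyLab : (V X → Equiv.Perm X) → V X → V X
  | _, [] => []
  | ℓ, a :: w => ℓ [] a :: applyLab (fun v => ℓ (a :: v)) w

def invLab : (V X → Equiv.Perm X) → V X → V X
  | _, [] => []
  | ℓ, b :: w => (ℓ [])⁻¹ b :: invLab (fun v => ℓ (((ℓ [])⁻¹ b) :: v)) w

@[simp] lemma applyLab_nil (ℓ : V X → Equiv.Perm X) : applyLab ℓ [] = [] := rfl
@[simp] lemma applyLab_cons (ℓ : V X → Equiv.Perm X) (a : X) (w : V X) :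
    applyLab ℓ (a :: w) = ℓ [] a :: applyLab (fun v => ℓ (a :: v)) w := rfl

lemma length_applyLab (ℓ : V X → Equiv.Perm X) (w : V X) :
    (applyLab ℓ w).length = w.length := by
  induction w generalizing ℓ with
  | nil => rfl
  | cons a w ih => simp [applyLab, ih]

lemma applyLab_invLab (ℓ : V X → Equiv.Perm X) (w : V X) :
    applyLab ℓ (invLab ℓ w) = w := by
  induction w generalizing ℓ with
  | nil => rfl
  | cons b w ih => simp [invLab, applyLab, ih]

lemma invLab_applyLab (ℓ : V X → Equiv.Perm X) (w : V X) :
    invLab ℓ (applyLab ℓ w) = w := by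
  induction w generalizing ℓ with
  | nil => rfl
  | cons a w ih => simp [invLab, applyLab, ih]

/-- The tree automorphism determined by a labeling. -/
def permOfLab (ℓ : V X → Equiv.Perm X) : Equiv.Perm (V X) where
  toFun := applyLab ℓ
  invFun := invLab ℓ
  left_inv := invLab_applyLab ℓ
  right_inv := applyLab_invLab ℓ

lemma applyLab_append (ℓ : V X → Equiv.Perm X) (v : V X) (a : X) :
    applyLab ℓ (v ++ [a]) = applyLab ℓ v ++ [ℓ v a] := by
  induction v generalizing ℓ with
  | nil => rfl
  | cons b v ih => simp [applyLab, ih]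

lemma invLab_append (ℓ : V X → Equiv.Perm X) (v : V X) (b : X) :
    invLab ℓ (v ++ [b]) = invLab ℓ v ++ [(ℓ (invLab ℓ v))⁻¹ b] := by
  induction v generalizing ℓ with
  | nil => rfl
  | cons c v ih => simp [invLab, ih]

lemma permOfLab_mem_AutT (ℓ : V X → Equiv.Perm X) : permOfLab ℓ ∈ AutT X := by
  constructor
  · exact ⟨rfl, fun v a => ⟨ℓ v a, applyLab_append ℓ v a⟩⟩
  · exact ⟨rfl, fun v b => ⟨(ℓ (invLab ℓ v))⁻¹ b, invLab_append ℓ v b⟩⟩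

lemma hasLabel_permOfLab (ℓ : V X → Equiv.Perm X) (v : V X) :
    HasLabel (permOfLab ℓ) v (ℓ v) :=
  fun a => applyLab_append ℓ v a

/-- A tree automorphism fixing the root is determined by its labels. -/
lemma eq_applyLab_of_labels {g : Equiv.Perm (V X)} {ℓ : V X → Equiv.Perm X}
    (h0 : g [] = []) (hl : ∀ v : V X, HasLabel g v (ℓ v)) (v : V X) :
    g v = applyLab ℓ v := by
  induction v using List.reverseRecOn with
  | nil => simpa using h0
  | append_singleton v a ih => rw [hl v a, ih, applyLab_append]

end LabelPerm
section FiniteModel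

variable {d : ℕ} (S : Finset (Equiv.Perm (Fin d)))

/-- Depth-`n` truncated labelings with labels in `S`. -/
def Lab : ℕ → Type
  | 0 => PUnit
  | n+1 => {σ : Equiv.Perm (Fin d) // σ ∈ S} × (Fin d → Lab n)

instance instDecEqLab : (n : ℕ) → DecidableEq (Lab S n)
  | 0 => inferInstanceAs (DecidableEq PUnit)
  | n+1 => @instDecidableEqProd _ _ _ (@Fintype.decidablePiFintype _ _ (fun _ => instDecEqLab n) _)

instance instFintypeLab : (n : ℕ) → Fintype (Lab S n)
  | 0 => inferInstanceAs (Fintype PUnit)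
  | n+1 => @instFintypeProd _ _ _ (@Pi.instFintype _ _ _ _ fun _ => instFintypeLab n)

def instNonemptyLab (hS : S.Nonempty) : (n : ℕ) → Nonempty (Lab S n)
  | 0 => ⟨PUnit.unit⟩
  | n+1 => ⟨⟨⟨hS.choose, hS.choose_spec⟩, fun _ => (instNonemptyLab hS n).some⟩⟩

/-- Action of a truncated labeling on words. -/
def actLab : (n : ℕ) → Lab S n → V (Fin d) → V (Fin d)
  | 0, _, w => w
  | _+1, _, [] => []
  | n+1, u, a :: w => u.1.1 a :: actLab n (u.2 a) w

/-- Extend a truncated labeling to a full labeling, using `σ0` below depth `n`. -/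
def extLab (σ0 : Equiv.Perm (Fin d)) : (n : ℕ) → Lab S n → V (Fin d) → Equiv.Perm (Fin d)
  | 0, _, _ => σ0
  | _+1, u, [] => u.1.1
  | n+1, u, a :: v => extLab σ0 n (u.2 a) v

/-- Truncate a full labeling. -/
def truncLab (ℓ : V (Fin d) → Equiv.Perm (Fin d)) (hl : ∀ v, ℓ v ∈ S) :
    (n : ℕ) → Lab S n
  | 0 => PUnit.unit
  | n+1 => ⟨⟨ℓ [], hl []⟩, fun a => truncLab (fun v => ℓ (a :: v)) (fun v => hl (a :: v)) n⟩

lemma truncLab_extLab (σ0 : Equiv.Perm (Fin d)) (n : ℕ) (u : Lab S n)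
    (h : ∀ v, extLab S σ0 n u v ∈ S) : truncLab S (extLab S σ0 n u) h n = u := by
  induction n with
  | zero => rfl
  | succ n ih =>
    obtain ⟨σ, t⟩ := u
    refine Prod.ext (Subtype.ext rfl) (funext fun a => ?_)
    exact ih (t a) (fun v => h (a :: v))

lemma extLab_mem (σ0 : Equiv.Perm (Fin d)) (hσ0 : σ0 ∈ S) (n : ℕ) (u : Lab S n) (v : V (Fin d)) :
    extLab S σ0 n u v ∈ S := by
  induction n generalizing v with
  | zero => exact hσ0
  | succ n ih => cases v with
    | nil => exact u.1.2
    | cons a v => exact ih (u.2 a) v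

lemma actLab_eq_applyLab (ℓ : V (Fin d) → Equiv.Perm (Fin d)) (hl : ∀ v, ℓ v ∈ S)
    (n : ℕ) (w : V (Fin d)) (hw : w.length = n) :
    actLab S n (truncLab S ℓ hl n) w = applyLab ℓ w := by
  induction n generalizing ℓ w with
  | zero => cases w with
    | nil => rfl
    | cons a w => simp at hw
  | succ n ih => cases w with
    | nil => simp at hw
    | cons a w =>
      simp only [actLab, truncLab, applyLab_cons]
      exact congrArg _ (ih _ _ w (by simpa using hw))

/-- The action of an extension on words of length `n` is the model action. -/
lemma applyLab_extLab (σ0 : Equiv.Perm (Fin d)) (hσ0 : σ0 ∈ S) (n : ℕ) (u : Lab S n)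
    (w : V (Fin d)) (hw : w.length = n) :
    applyLab (extLab S σ0 n u) w = actLab S n u w := by
  rw [← actLab_eq_applyLab S _ (extLab_mem S σ0 hσ0 n u) n w hw,
    truncLab_extLab]

/-- Whether a truncated labeling fixes some word of length `n`. -/
def HasFixLab : (n : ℕ) → Lab S n → Prop
  | 0, _ => True
  | n+1, u => ∃ a, u.1.1 a = a ∧ HasFixLab n (u.2 a)

instance instDecHasFixLab : (n : ℕ) → (u : Lab S n) → Decidable (HasFixLab S n u)
  | 0, _ => .isTrue trivial
  | n+1, u => @Fintype.decidableExistsFintype _ _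
      (fun a => @instDecidableAnd _ _ _ (instDecHasFixLab n (u.2 a))) _

lemma hasFixLab_iff (n : ℕ) (u : Lab S n) :
    HasFixLab S n u ↔ ∃ w : V (Fin d), w.length = n ∧ actLab S n u w = w := by
  induction n with
  | zero =>
    simp only [HasFixLab, true_iff]
    exact ⟨[], rfl, rfl⟩
  | succ n ih =>
    constructor
    · rintro ⟨a, ha, hf⟩
      obtain ⟨w, hw, hfix⟩ := (ih (u.2 a)).1 hf
      exact ⟨a :: w, by simpa using hw, by simp [actLab, ha, hfix]⟩
    · rintro ⟨w, hw, hfix⟩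
      cases w with
      | nil => simp at hw
      | cons a w =>
        simp only [actLab, List.cons.injEq] at hfix
        exact ⟨a, hfix.1, (ih (u.2 a)).2 ⟨w, by simpa using hw, hfix.2⟩⟩

end FiniteModel
section Counting

variable {d : ℕ} (S : Finset (Equiv.Perm (Fin d)))

/-- Number of fixed points of a permutation of `Fin d`. -/
def nfix (σ : Equiv.Perm (Fin d)) : ℕ := (Finset.univ.filter fun x : Fin d => σ x = x).card

/-- Total number of depth-`n` truncated labelings. -/
def Tcnt (n : ℕ) : ℕ := Fintype.card (Lab S n)

/-- Number of depth-`n` truncated labelings fixing no word of length `n`. -/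
def Qcnt (n : ℕ) : ℕ :=
  (Finset.univ.filter fun u : Lab S n => ¬ HasFixLab S n u).card

/-- Number of depth-`n` truncated labelings fixing some word of length `n`. -/
def Fcnt (n : ℕ) : ℕ :=
  (Finset.univ.filter fun u : Lab S n => HasFixLab S n u).card

@[simp] lemma Tcnt_zero : Tcnt S 0 = 1 := rfl

@[simp] lemma Qcnt_zero : Qcnt S 0 = 0 := by
  simp [Qcnt, HasFixLab]

lemma Fcnt_add_Qcnt (n : ℕ) : Fcnt S n + Qcnt S n = Tcnt S n := by
  classical
  rw [Fcnt, Qcnt, Finset.card_filter_add_card_filter_not, Tcnt]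
  rfl

lemma Tcnt_succ (n : ℕ) : Tcnt S (n+1) = S.card * Tcnt S n ^ d := by
  have h : Tcnt S (n+1) =
      Fintype.card ({σ : Equiv.Perm (Fin d) // σ ∈ S} × (Fin d → Lab S n)) :=
    Fintype.card_congr (Equiv.refl _)
  rw [h, Fintype.card_prod, Fintype.card_fun, Fintype.card_coe, Fintype.card_fin, Tcnt]

lemma Tcnt_pos (hS : S.Nonempty) (n : ℕ) : 0 < Tcnt S n := by
  have := instNonemptyLab S hS n
  exact Fintype.card_pos

lemma Qcnt_succ (n : ℕ) :
    Qcnt S (n+1) = ∑ σ ∈ S, Qcnt S n ^ nfix σ * Tcnt S n ^ (d - nfix σ) := by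
  classical
  have h1 : Qcnt S (n+1) = Fintype.card
      {u : Lab S (n+1) // ¬ HasFixLab S (n+1) u} := (Fintype.card_subtype _).symm
  have e1 : {u : Lab S (n+1) // ¬ HasFixLab S (n+1) u} ≃
      {p : {σ : Equiv.Perm (Fin d) // σ ∈ S} × (Fin d → Lab S n) //
        ∀ a : Fin d, p.1.1 a = a → ¬ HasFixLab S n (p.2 a)} :=
    Equiv.subtypeEquivRight (by
      intro u
      show (¬ HasFixLab S (n+1) u) ↔ _
      simp only [HasFixLab, not_exists, not_and])
  have e2 := Equiv.subtypeProdEquivSigmaSubtype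
    (fun (σ : {σ : Equiv.Perm (Fin d) // σ ∈ S}) (t : Fin d → Lab S n) =>
      ∀ a : Fin d, σ.1 a = a → ¬ HasFixLab S n (t a))
  rw [h1, Fintype.card_congr (e1.trans e2), Fintype.card_sigma]
  have hcard : ∀ σ : {σ : Equiv.Perm (Fin d) // σ ∈ S},
      Fintype.card {t : Fin d → Lab S n // ∀ a : Fin d, σ.1 a = a → ¬ HasFixLab S n (t a)}
        = Qcnt S n ^ nfix σ.1 * Tcnt S n ^ (d - nfix σ.1) := by
    intro σ
    rw [Fintype.card_congr (Equiv.subtypePiEquivPi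
      (p := fun (a : Fin d) (x : Lab S n) => σ.1 a = a → ¬ HasFixLab S n x)),
      Fintype.card_pi]
    have : ∀ a : Fin d, Fintype.card {x : Lab S n // σ.1 a = a → ¬ HasFixLab S n x}
        = if σ.1 a = a then Qcnt S n else Tcnt S n := by
      intro a
      by_cases ha : σ.1 a = a
      · rw [if_pos ha, Fintype.card_congr (Equiv.subtypeEquivRight (q := fun x =>
          ¬ HasFixLab S n x) (by intro x; simp [ha]))]
        exact Fintype.card_subtype _
      · rw [if_neg ha, Fintype.card_congr (Equiv.subtypeEquivRight (q := fun _ => True)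
          (by intro x; simp [ha])), Fintype.card_congr (Equiv.subtypeUnivEquiv fun _ => trivial)]
        rfl
    rw [Finset.prod_congr rfl (fun a _ => this a), Finset.prod_ite, Finset.prod_const,
      Finset.prod_const]
    have h2 := Finset.card_filter_add_card_filter_not
      (s := (Finset.univ : Finset (Fin d))) (p := fun a => σ.1 a = a)
    rw [Finset.card_univ, Fintype.card_fin] at h2
    have hn : (Finset.univ.filter fun a : Fin d => σ.1 a = a).card = nfix σ.1 := rfl
    have hnn : (Finset.univ.filter fun a : Fin d => ¬ σ.1 a = a).card = d - nfix σ.1 := by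
      omega
    rw [hn, hnn]
  rw [Finset.sum_congr rfl (fun σ _ => hcard σ), Finset.univ_eq_attach]
  exact Finset.sum_attach S (fun σ => Qcnt S n ^ nfix σ * Tcnt S n ^ (d - nfix σ))

end Counting
section Bijection

variable {d : ℕ} (S : Finset (Equiv.Perm (Fin d)))

/-- The level-`n` action of a truncated labeling. -/
def betaMap (n : ℕ) (u : Lab S n) : {v : V (Fin d) // v.length = n} → V (Fin d) :=
  fun v => actLab S n u v.1

lemma actLab_injective (hd : 0 < d) (n : ℕ) (u u' : Lab S n)
    (h : ∀ w : V (Fin d), w.length = n → actLab S n u w = actLab S n u' w) : u = u' := by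
  induction n with
  | zero => rfl
  | succ n ih =>
    obtain ⟨σ, t⟩ := u
    obtain ⟨σ', t'⟩ := u'
    have key : ∀ (a : Fin d) (w : V (Fin d)), w.length = n →
        σ.1 a = σ'.1 a ∧ actLab S n (t a) w = actLab S n (t' a) w := by
      intro a w hw
      have := h (a :: w) (by simpa using hw)
      simpa [actLab] using this
    have hw0 : (List.replicate n (⟨0, hd⟩ : Fin d)).length = n := List.length_replicate
    refine Prod.ext (Subtype.ext (Equiv.ext fun a => (key a _ hw0).1)) (funext fun a => ?_)
    exact ih (t a) (t' a) (fun w hw => (key a w hw).2)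

lemma betaMap_injective (hd : 0 < d) (n : ℕ) : Function.Injective (betaMap S n) := by
  intro u u' h
  refine actLab_injective S hd n u u' (fun w hw => ?_)
  exact congrFun h ⟨w, hw⟩

/-- Labels of an element of `W_S`, via choice. -/
noncomputable def labOf (g : Equiv.Perm (V (Fin d))) (hg : g ∈ WS (S : Set (Equiv.Perm (Fin d))))
    (v : V (Fin d)) : Equiv.Perm (Fin d) :=
  (hg.2 v).choose

lemma labOf_mem {g : Equiv.Perm (V (Fin d))} (hg : g ∈ WS (S : Set (Equiv.Perm (Fin d))))
    (v : V (Fin d)) : labOf S g hg v ∈ S :=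
  (hg.2 v).choose_spec.1

lemma labOf_hasLabel {g : Equiv.Perm (V (Fin d))} (hg : g ∈ WS (S : Set (Equiv.Perm (Fin d))))
    (v : V (Fin d)) : HasLabel g v (labOf S g hg v) :=
  (hg.2 v).choose_spec.2

lemma permOfLab_mem_WS (ℓ : V (Fin d) → Equiv.Perm (Fin d)) (hl : ∀ v, ℓ v ∈ S) :
    permOfLab ℓ ∈ WS (S : Set (Equiv.Perm (Fin d))) :=
  ⟨permOfLab_mem_AutT ℓ, fun v => ⟨ℓ v, hl v, hasLabel_permOfLab ℓ v⟩⟩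

lemma piSet_eq_range (hS : S.Nonempty) (n : ℕ) :
    piSet (WS (S : Set (Equiv.Perm (Fin d)))) n = Set.range (betaMap S n) := by
  obtain ⟨σ0, hσ0⟩ := hS
  ext f
  constructor
  · rintro ⟨g, hg, rfl⟩
    refine ⟨truncLab S (labOf S g hg) (labOf_mem S hg) n, ?_⟩
    funext v
    rw [betaMap, actLab_eq_applyLab S _ _ n v.1 v.2]
    exact (eq_applyLab_of_labels hg.1.1.1 (labOf_hasLabel S hg) v.1).symm
  · rintro ⟨u, rfl⟩
    refine ⟨permOfLab (extLab S σ0 n u), permOfLab_mem_WS S _ (extLab_mem S σ0 hσ0 n u), ?_⟩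
    funext v
    show applyLab _ v.1 = _
    rw [applyLab_extLab S σ0 hσ0 n u v.1 v.2]
    rfl

lemma fixSet_eq_image (hS : S.Nonempty) (n : ℕ) :
    fixSet (WS (S : Set (Equiv.Perm (Fin d)))) n =
      betaMap S n '' {u : Lab S n | HasFixLab S n u} := by
  ext f
  rw [fixSet, Set.mem_setOf_eq, piSet_eq_range S hS n]
  constructor
  · rintro ⟨⟨u, rfl⟩, v, hv⟩
    exact ⟨u, (hasFixLab_iff S n u).2 ⟨v.1, v.2, hv⟩, rfl⟩
  · rintro ⟨u, hu, rfl⟩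
    obtain ⟨w, hw, hfix⟩ := (hasFixLab_iff S n u).1 hu
    exact ⟨⟨u, rfl⟩, ⟨w, hw⟩, hfix⟩

lemma ncard_piSet (hd : 0 < d) (hS : S.Nonempty) (n : ℕ) :
    (piSet (WS (S : Set (Equiv.Perm (Fin d)))) n).ncard = Tcnt S n := by
  rw [piSet_eq_range S hS n, ← Set.image_univ,
    Set.ncard_image_of_injective _ (betaMap_injective S hd n), Set.ncard_univ, Tcnt,
    Nat.card_eq_fintype_card]

lemma ncard_fixSet (hd : 0 < d) (hS : S.Nonempty) (n : ℕ) :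
    (fixSet (WS (S : Set (Equiv.Perm (Fin d)))) n).ncard = Fcnt S n := by
  classical
  rw [fixSet_eq_image S hS n,
    Set.ncard_image_of_injective _ (betaMap_injective S hd n)]
  rw [show {u : Lab S n | HasFixLab S n u} =
    ↑(Finset.univ.filter fun u : Lab S n => HasFixLab S n u) by ext u; simp]
  rw [Set.ncard_coe_finset]
  rfl

lemma FPPseq_eq (hd : 0 < d) (hS : S.Nonempty) (n : ℕ) :
    FPPseq (WS (S : Set (Equiv.Perm (Fin d)))) n = (Fcnt S n : ℝ) / (Tcnt S n : ℝ) := by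
  rw [FPPseq, ncard_piSet S hd hS n, ncard_fixSet S hd hS n]

end Bijection
section Analysis

variable {d : ℕ} (S : Finset (Equiv.Perm (Fin d)))

lemma one_sub_pow_le' (x : ℝ) (h0 : 0 ≤ x) (h1 : x ≤ 1) (k : ℕ) :
    1 - x ^ k ≤ k * (1 - x) := by
  induction k with
  | zero => simp
  | succ k ih =>
    have hx : x ^ (k+1) = x * x ^ k := by ring
    have h2 : x * (1 - x ^ k) ≤ 1 * (k * (1 - x)) := by
      refine mul_le_mul h1 (le_trans ?_ ih) ?_ zero_le_one
      · exact le_refl _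
      · have : x ^ k ≤ 1 := pow_le_one₀ h0 h1
        linarith
    push_cast
    nlinarith [pow_le_one₀ h0 h1 (n := k)]

lemma nfix_le (σ : Equiv.Perm (Fin d)) : nfix σ ≤ d := by
  have := Finset.card_filter_le (Finset.univ : Finset (Fin d)) (fun x => σ x = x)
  simpa [nfix] using this

/-- The generating polynomial `g` of `S` (probability g.f. of fixed-point counts). -/
noncomputable def gp : Polynomial ℝ :=
  Polynomial.C ((S.card : ℝ)⁻¹) * ∑ σ ∈ S, Polynomial.X ^ nfix σ

lemma gp_eval (x : ℝ) : (gp S).eval x = (S.card : ℝ)⁻¹ * ∑ σ ∈ S, x ^ nfix σ := by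
  simp [gp, Polynomial.eval_finset_sum]

lemma gp_eval_one (hS : S.Nonempty) : (gp S).eval 1 = 1 := by
  have : (S.card : ℝ) ≠ 0 := by
    exact_mod_cast (Finset.card_pos.mpr hS).ne'
  simp [gp_eval, this]

lemma gp_mono (hS : S.Nonempty) {x y : ℝ} (h0 : 0 ≤ x) (hxy : x ≤ y) :
    (gp S).eval x ≤ (gp S).eval y := by
  rw [gp_eval, gp_eval]
  have hN : (0:ℝ) ≤ (S.card : ℝ)⁻¹ := by positivity
  refine mul_le_mul_of_nonneg_left ?_ hN
  exact Finset.sum_le_sum fun σ _ => pow_le_pow_left₀ h0 hxy _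

lemma gp_nonneg (hS : S.Nonempty) {x : ℝ} (h0 : 0 ≤ x) : 0 ≤ (gp S).eval x := by
  rw [gp_eval]
  have hN : (0:ℝ) ≤ (S.card : ℝ)⁻¹ := by positivity
  exact mul_nonneg hN (Finset.sum_nonneg fun σ _ => pow_nonneg h0 _)

lemma gp_deriv_one : (Polynomial.derivative (gp S)).eval 1 =
    (S.card : ℝ)⁻¹ * ∑ σ ∈ S, (nfix σ : ℝ) := by
  rw [gp, Polynomial.derivative_C_mul, Polynomial.derivative_sum]
  simp [Polynomial.eval_finset_sum, Polynomial.derivative_X_pow]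

/-- Sum of the truncated `nfix - 1` is at most the number of fixed-point-free elements. -/
lemma sum_sub_one_le (hm : ∑ σ ∈ S, nfix σ ≤ S.card) :
    ∑ σ ∈ S, (nfix σ - 1) ≤ (S.filter fun σ => nfix σ = 0).card := by
  classical
  have h1 : ∀ σ ∈ S, (nfix σ - 1) + 1 = nfix σ + (if nfix σ = 0 then 1 else 0) := by
    intro σ _
    by_cases h : nfix σ = 0 <;> simp [h] <;> omega
  have h2 : ∑ σ ∈ S, ((nfix σ - 1) + 1) = ∑ σ ∈ S, (nfix σ + if nfix σ = 0 then 1 else 0) :=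
    Finset.sum_congr rfl h1
  rw [Finset.sum_add_distrib, Finset.sum_add_distrib, Finset.sum_const,
    ← Finset.card_filter] at h2
  simp only [smul_eq_mul, mul_one] at h2
  omega

/-- Key inequality: if the mean number of fixed points is ≤ 1 and some element of `S` is
fixed-point-free, then `g(x) ≥ x + (D₀/N)(1-x)²` on `[0,1]`. -/
lemma gp_lower (hS : S.Nonempty) (hm : ∑ σ ∈ S, nfix σ ≤ S.card)
    {x : ℝ} (h0 : 0 ≤ x) (h1 : x ≤ 1) :
    x + ((S.filter fun σ => nfix σ = 0).card : ℝ) / (S.card : ℝ) * (1 - x)^2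
      ≤ (gp S).eval x := by
  classical
  set N : ℝ := (S.card : ℝ) with hNdef
  have hNpos : (0:ℝ) < N := by
    rw [hNdef]
    exact_mod_cast Finset.card_pos.mpr hS
  set D0 : ℝ := ((S.filter fun σ => nfix σ = 0).card : ℝ) with hD0def
  have key : ∀ σ ∈ S, x + (if nfix σ = 0 then (1-x) else 0)
      - x * (1 - x) * ((nfix σ - 1 : ℕ) : ℝ) ≤ x ^ nfix σ := by
    intro σ _
    rcases Nat.eq_zero_or_pos (nfix σ) with hf | hf
    · simp only [hf, if_pos rfl, pow_zero, Nat.zero_sub, Nat.cast_zero]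
      ring_nf
      norm_num
    · rw [if_neg (by omega)]
      rcases Nat.eq_or_lt_of_le hf with hf1 | hf2
      · simp only [← hf1, pow_one]
        norm_num
      · have h1s : 1 - x ^ (nfix σ - 1) ≤ ((nfix σ - 1 : ℕ) : ℝ) * (1 - x) :=
          one_sub_pow_le' x h0 h1 _
        have hxpow : x ^ nfix σ = x * x ^ (nfix σ - 1) := by
          rw [← pow_succ']
          congr 1
          omega
        nlinarith [pow_nonneg h0 (nfix σ - 1)]
  have hsum := Finset.sum_le_sum key
  have hsplit : ∑ σ ∈ S, (x + (if nfix σ = 0 then (1-x) else 0)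
      - x * (1 - x) * ((nfix σ - 1 : ℕ) : ℝ))
      = N * x + D0 * (1-x) - x * (1-x) * (∑ σ ∈ S, ((nfix σ - 1 : ℕ) : ℝ)) := by
    rw [Finset.sum_sub_distrib, Finset.sum_add_distrib, Finset.sum_const, ← Finset.sum_filter,
      Finset.sum_const, ← Finset.mul_sum]
    simp only [smul_eq_mul, mul_one, hNdef, hD0def]
    ring
  have hD0le : (∑ σ ∈ S, ((nfix σ - 1 : ℕ) : ℝ)) ≤ D0 := by
    rw [hD0def, ← Nat.cast_sum]
    exact_mod_cast sum_sub_one_le S hm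
  have hx1 : 0 ≤ x * (1 - x) := mul_nonneg h0 (by linarith)
  have hmain : N * x + D0 * (1-x)^2 ≤ ∑ σ ∈ S, x ^ nfix σ := by
    have hb : x * (1-x) * (∑ σ ∈ S, ((nfix σ - 1 : ℕ) : ℝ)) ≤ x * (1-x) * D0 :=
      mul_le_mul_of_nonneg_left hD0le hx1
    rw [hsplit] at hsum
    nlinarith
  rw [gp_eval]
  have heq : x + D0 / N * (1 - x)^2 = (N * x + D0 * (1-x)^2) / N := by
    field_simp
  rw [heq, inv_mul_eq_div]
  gcongr

end Analysis
section Dynamics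

variable {d : ℕ} (S : Finset (Equiv.Perm (Fin d)))

/-- Proportion of truncated labelings with no fixed word at level `n`. -/
noncomputable def qseq (n : ℕ) : ℝ := (Qcnt S n : ℝ) / (Tcnt S n : ℝ)

@[simp] lemma qseq_zero : qseq S 0 = 0 := by simp [qseq]

lemma qseq_nonneg (n : ℕ) : 0 ≤ qseq S n := by rw [qseq]; positivity

lemma Qcnt_le_Tcnt (n : ℕ) : Qcnt S n ≤ Tcnt S n := by
  rw [Qcnt, Tcnt, ← Finset.card_univ]
  exact Finset.card_filter_le _ _

lemma qseq_le_one (n : ℕ) : qseq S n ≤ 1 := by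
  rw [qseq]
  rcases Nat.eq_zero_or_pos (Tcnt S n) with h | h
  · simp [h]
  · rw [div_le_one (by exact_mod_cast h)]
    exact_mod_cast Qcnt_le_Tcnt S n

lemma qseq_succ (hS : S.Nonempty) (n : ℕ) :
    qseq S (n + 1) = (gp S).eval (qseq S n) := by
  have hT : (0:ℝ) < (Tcnt S n : ℝ) := by exact_mod_cast Tcnt_pos S hS n
  have hN : (0:ℝ) < (S.card : ℝ) := by exact_mod_cast Finset.card_pos.mpr hS
  rw [qseq, Qcnt_succ, Tcnt_succ, gp_eval, qseq]
  push_cast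
  rw [Finset.mul_sum, Finset.sum_div]
  refine Finset.sum_congr rfl fun σ _ => ?_
  have hfd := nfix_le σ
  have hTd : ((Tcnt S n : ℝ))^d = (Tcnt S n : ℝ)^(nfix σ) * (Tcnt S n : ℝ)^(d - nfix σ) := by
    rw [← pow_add]
    congr 1
    omega
  rw [div_pow, hTd]
  field_simp

lemma qseq_mono (hS : S.Nonempty) : Monotone (qseq S) := by
  refine monotone_nat_of_le_succ fun n => ?_
  induction n with
  | zero => rw [qseq_zero]; exact qseq_nonneg S 1
  | succ n ih =>
    rw [qseq_succ S hS n, qseq_succ S hS (n+1)]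
    exact gp_mono S hS (qseq_nonneg S n) ih

/-- The limit of the `qseq`. -/
noncomputable def qlim : ℝ := ⨆ n, qseq S n

lemma qseq_tendsto (hS : S.Nonempty) :
    Filter.Tendsto (qseq S) Filter.atTop (nhds (qlim S)) :=
  tendsto_atTop_ciSup (qseq_mono S hS) ⟨1, fun x ⟨n, hn⟩ => hn ▸ qseq_le_one S n⟩

lemma qlim_nonneg (hS : S.Nonempty) : 0 ≤ qlim S := by
  have := le_ciSup (f := qseq S) ⟨1, fun x ⟨n, hn⟩ => hn ▸ qseq_le_one S n⟩ 0
  rw [qseq_zero] at this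
  exact this

lemma qlim_le_one (hS : S.Nonempty) : qlim S ≤ 1 :=
  ciSup_le fun n => qseq_le_one S n

lemma qlim_fixed (hS : S.Nonempty) : (gp S).eval (qlim S) = qlim S := by
  have h1 : Filter.Tendsto (fun n => qseq S (n + 1)) Filter.atTop (nhds (qlim S)) :=
    (qseq_tendsto S hS).comp (Filter.tendsto_add_atTop_nat 1)
  have h2 : Filter.Tendsto (fun n => (gp S).eval (qseq S n)) Filter.atTop
      (nhds ((gp S).eval (qlim S))) :=
    ((gp S).continuous_aeval.tendsto _).comp (qseq_tendsto S hS)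
  rw [show (fun n => qseq S (n + 1)) = fun n => (gp S).eval (qseq S n) from
    funext fun n => qseq_succ S hS n] at h1
  exact tendsto_nhds_unique h2 h1

lemma FPPseq_eq_one_sub (hd : 0 < d) (hS : S.Nonempty) (n : ℕ) :
    FPPseq (WS (S : Set (Equiv.Perm (Fin d)))) n = 1 - qseq S n := by
  have hT : (0:ℝ) < (Tcnt S n : ℝ) := by exact_mod_cast Tcnt_pos S hS n
  rw [FPPseq_eq S hd hS n, qseq]
  have hF : (Fcnt S n : ℝ) = (Tcnt S n : ℝ) - (Qcnt S n : ℝ) := by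
    have := Fcnt_add_Qcnt S n
    have h2 : (Fcnt S n : ℝ) + (Qcnt S n : ℝ) = (Tcnt S n : ℝ) := by exact_mod_cast this
    linarith
  rw [hF]
  field_simp

/-- Case ≤1 with a fixed-point-free element: the fixed-point proportion tends to 0. -/
lemma tendsto_of_subcritical (hd : 0 < d) (hS : S.Nonempty)
    (hm : ∑ σ ∈ S, nfix σ ≤ S.card)
    (hD0 : 0 < (S.filter fun σ => nfix σ = 0).card) :
    Filter.Tendsto (FPPseq (WS (S : Set (Equiv.Perm (Fin d)))))
      Filter.atTop (nhds 0) := by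
  have hlim1 : qlim S = 1 := by
    by_contra hne
    have hlt : qlim S < 1 := lt_of_le_of_ne (qlim_le_one S hS) hne
    have hlow := gp_lower S hS hm (qlim_nonneg S hS) (qlim_le_one S hS)
    rw [qlim_fixed S hS] at hlow
    have hc : (0:ℝ) < ((S.filter fun σ => nfix σ = 0).card : ℝ) / (S.card : ℝ) := by
      have hN : (0:ℝ) < (S.card : ℝ) := by exact_mod_cast Finset.card_pos.mpr hS
      have : (0:ℝ) < ((S.filter fun σ => nfix σ = 0).card : ℝ) := by exact_mod_cast hD0
      positivity
    have h2 : (0:ℝ) < (1 - qlim S)^2 := pow_pos (by linarith) 2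
    nlinarith [mul_pos hc h2]
  have : Filter.Tendsto (fun n => 1 - qseq S n) Filter.atTop (nhds (1 - qlim S)) :=
    tendsto_const_nhds.sub (qseq_tendsto S hS)
  rw [hlim1, sub_self] at this
  exact this.congr fun n => (FPPseq_eq_one_sub S hd hS n).symm

/-- Supercritical case: the fixed-point proportion does not tend to 0. -/
lemma not_tendsto_of_supercritical (hd : 0 < d) (hS : S.Nonempty)
    (hm : S.card < ∑ σ ∈ S, nfix σ) :
    ¬ Filter.Tendsto (FPPseq (WS (S : Set (Equiv.Perm (Fin d)))))
      Filter.atTop (nhds 0) := by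
  have hN : (0:ℝ) < (S.card : ℝ) := by exact_mod_cast Finset.card_pos.mpr hS
  -- derivative of g at 1 exceeds 1
  have hm' : 1 < (Polynomial.derivative (gp S)).eval 1 := by
    rw [gp_deriv_one, inv_mul_eq_div, lt_div_iff₀ hN, one_mul]
    exact_mod_cast hm
  -- find t0 ∈ (0,1) with g t0 < t0
  obtain ⟨t0, ht0mem, ht0⟩ : ∃ t0, t0 ∈ Set.Ioo (0:ℝ) 1 ∧ (gp S).eval t0 < t0 := by
    set φ : ℝ → ℝ := fun x => (gp S).eval x - x with hφ
    have hder : HasDerivAt φ ((Polynomial.derivative (gp S)).eval 1 - 1) 1 :=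
      ((gp S).hasDerivAt 1).sub (hasDerivAt_id 1)
    have hslope := hasDerivAt_iff_tendsto_slope.mp hder
    have hpos : ∀ᶠ x in nhdsWithin 1 {(1:ℝ)}ᶜ, 0 < slope φ 1 x :=
      hslope (Ioi_mem_nhds (by linarith))
    have hpos' : ∀ᶠ x in nhdsWithin (1:ℝ) (Set.Iio 1), 0 < slope φ 1 x :=
      hpos.filter_mono (nhdsWithin_mono 1 fun x hx => ne_of_lt hx)
    have hIoo : Set.Ioo (0:ℝ) 1 ∈ nhdsWithin (1:ℝ) (Set.Iio 1) := by
      rw [mem_nhdsWithin]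
      exact ⟨Set.Ioi 0, isOpen_Ioi, by norm_num, fun x hx => ⟨hx.1, hx.2⟩⟩
    obtain ⟨x, hx1, hx2⟩ := (hpos'.and (Filter.eventually_of_mem hIoo fun x hx => hx)).exists
    refine ⟨x, hx2, ?_⟩
    have hφ1 : φ 1 = 0 := by simp [hφ, gp_eval_one S hS]
    rw [slope_def_field, hφ1, sub_zero, div_pos_iff] at hx1
    rcases hx1 with ⟨hnum, hden⟩ | ⟨hnum, hden⟩
    · linarith [hx2.2]
    · simp only [hφ] at hnum
      linarith
  -- q_n stays below t0
  have hq : ∀ n, qseq S n ≤ t0 := by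
    intro n
    induction n with
    | zero => rw [qseq_zero]; exact le_of_lt ht0mem.1
    | succ n ih =>
      rw [qseq_succ S hS n]
      exact le_of_lt (lt_of_le_of_lt (gp_mono S hS (qseq_nonneg S n) ih) ht0)
  intro htend
  have hq1 : Filter.Tendsto (qseq S) Filter.atTop (nhds 1) := by
    have : Filter.Tendsto (fun n => 1 - FPPseq (WS (S : Set (Equiv.Perm (Fin d)))) n)
        Filter.atTop (nhds (1 - 0)) := tendsto_const_nhds.sub htend
    rw [sub_zero] at this
    exact this.congr fun n => by rw [FPPseq_eq_one_sub S hd hS n]; ring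
  have := le_of_tendsto hq1 (Filter.Eventually.of_forall hq)
  linarith [ht0mem.2]

/-- Degenerate case: all elements have exactly one fixed point. -/
lemma not_tendsto_of_allfix1 (hd : 0 < d) (hS : S.Nonempty)
    (h1 : ∀ σ ∈ S, nfix σ = 1) :
    ¬ Filter.Tendsto (FPPseq (WS (S : Set (Equiv.Perm (Fin d)))))
      Filter.atTop (nhds 0) := by
  have hq0 : ∀ n, qseq S n = 0 := by
    intro n
    induction n with
    | zero => exact qseq_zero S
    | succ n ih =>
      rw [qseq_succ S hS n, ih, gp_eval]
      rw [Finset.sum_congr rfl (fun σ hσ => by rw [h1 σ hσ, pow_one])]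
      simp
  intro htend
  have : Filter.Tendsto (fun _ : ℕ => (1:ℝ)) Filter.atTop (nhds 0) :=
    htend.congr fun n => by rw [FPPseq_eq_one_sub S hd hS n, hq0 n, sub_zero]
  have h10 := tendsto_nhds_unique this tendsto_const_nhds
  norm_num at h10

end Dynamics
section CharPolyBridge

variable {d : ℕ} (S : Finset (Equiv.Perm (Fin d)))

lemma DS_eq (k : ℕ) : DS S k = (S.filter fun σ => nfix σ = k).card := rfl

lemma nfix_mem_range (σ : Equiv.Perm (Fin d)) : nfix σ ∈ Finset.range (d+1) :=
  Finset.mem_range.mpr (Nat.lt_succ_of_le (nfix_le σ))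

lemma sum_nfix_eq : ∑ σ ∈ S, nfix σ = ∑ k ∈ Finset.Icc 1 d, k * DS S k := by
  classical
  have hfib := Finset.sum_fiberwise_of_maps_to (g := nfix)
    (fun σ (_ : σ ∈ S) => nfix_mem_range σ) (fun σ => nfix σ)
  rw [← hfib]
  have hinner : ∀ k ∈ Finset.range (d+1),
      ∑ σ ∈ S.filter (fun σ => nfix σ = k), nfix σ = k * DS S k := by
    intro k _
    rw [Finset.sum_congr rfl (fun σ hσ => (Finset.mem_filter.mp hσ).2),
      Finset.sum_const, DS_eq, smul_eq_mul, mul_comm]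
  rw [Finset.sum_congr rfl hinner]
  refine (Finset.sum_subset ?_ ?_).symm
  · intro k hk
    rw [Finset.mem_Icc] at hk
    exact Finset.mem_range.mpr (by omega)
  · intro k hk1 hk2
    rw [Finset.mem_range] at hk1
    rw [Finset.mem_Icc] at hk2
    have : k = 0 := by omega
    rw [this, zero_mul]

lemma sum_DS : ∑ k ∈ Finset.range (d+1), DS S k = S.card := by
  classical
  exact (Finset.card_eq_sum_card_fiberwise
    (fun σ (_ : σ ∈ S) => nfix_mem_range σ)).symm

lemma deriv_charPoly_eval0 :
    (Polynomial.derivative (charPoly S)).eval 0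
      = ∑ k ∈ Finset.Icc 1 d, (DS S k : ℝ) / (S.card : ℝ) * k := by
  rw [charPoly, Polynomial.derivative_sum, Polynomial.eval_finset_sum]
  refine Finset.sum_congr rfl fun k _ => ?_
  have hder : Polynomial.derivative ((1 : Polynomial ℝ) - (1 - Polynomial.X)^k)
      = Polynomial.C (k:ℝ) * (1 - Polynomial.X)^(k-1) := by
    rw [Polynomial.derivative_sub, Polynomial.derivative_one, Polynomial.derivative_pow,
      Polynomial.derivative_sub, Polynomial.derivative_one, Polynomial.derivative_X]
    ring
  rw [Polynomial.derivative_C_mul, hder]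
  simp

lemma deriv_charPoly_eval0' (hS : S.Nonempty) :
    (Polynomial.derivative (charPoly S)).eval 0
      = (∑ σ ∈ S, (nfix σ : ℝ)) / (S.card : ℝ) := by
  rw [deriv_charPoly_eval0, ← Nat.cast_sum, show (∑ σ ∈ S, nfix σ) = ∑ k ∈ Finset.Icc 1 d,
    k * DS S k from sum_nfix_eq S, Nat.cast_sum, Finset.sum_div]
  refine Finset.sum_congr rfl fun k _ => ?_
  push_cast
  ring

lemma charPoly_of_allfix1 (hd : 1 ≤ d) (hS : S.Nonempty)
    (h1 : ∀ σ ∈ S, nfix σ = 1) : charPoly S = Polynomial.X := by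
  classical
  have hN : (S.card : ℝ) ≠ 0 := by
    exact_mod_cast (Finset.card_pos.mpr hS).ne'
  have hD1 : DS S 1 = S.card := by
    rw [DS_eq, Finset.filter_true_of_mem h1]
  have hDk : ∀ k, k ≠ 1 → DS S k = 0 := by
    intro k hk
    rw [DS_eq, Finset.card_eq_zero, Finset.filter_eq_empty_iff]
    intro σ hσ
    rw [h1 σ hσ]
    omega
  rw [charPoly]
  rw [Finset.sum_eq_single 1]
  · rw [hD1, div_self hN]
    simp only [map_one, one_mul, pow_one]
    ring
  · intro k _ hk
    rw [hDk k hk]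
    simp
  · intro h
    exact absurd (Finset.mem_Icc.mpr ⟨le_refl 1, hd⟩) h

lemma allfix1_of_charPoly (hd : 1 ≤ d) (hS : S.Nonempty)
    (h : charPoly S = Polynomial.X) : ∀ σ ∈ S, nfix σ = 1 := by
  classical
  have hN : (0:ℝ) < (S.card : ℝ) := by exact_mod_cast Finset.card_pos.mpr hS
  -- evaluate the identity at 1 - y
  set A0 : ℝ := ∑ k ∈ Finset.Icc 1 d, (DS S k : ℝ) / (S.card : ℝ) with hA0
  set P : Polynomial ℝ := ∑ k ∈ Finset.Icc 1 d,
    Polynomial.C ((DS S k : ℝ) / (S.card : ℝ)) * Polynomial.X ^ k with hP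
  have hPX : P = Polynomial.X + Polynomial.C (A0 - 1) := by
    apply Polynomial.funext
    intro y
    have hev := congrArg (Polynomial.eval (1 - y)) h
    rw [Polynomial.eval_X, charPoly, Polynomial.eval_finset_sum] at hev
    simp only [Polynomial.eval_mul, Polynomial.eval_C, Polynomial.eval_sub,
      Polynomial.eval_one, Polynomial.eval_pow, Polynomial.eval_X] at hev
    have hev' : ∑ k ∈ Finset.Icc 1 d,
        ((DS S k : ℝ) / (S.card : ℝ)) * (1 - y ^ k) = 1 - y := by
      convert hev using 2 with k
      ring_nf
    have hsplit : ∑ k ∈ Finset.Icc 1 d, ((DS S k : ℝ) / (S.card : ℝ)) * (1 - y ^ k)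
        = A0 - ∑ k ∈ Finset.Icc 1 d, ((DS S k : ℝ) / (S.card : ℝ)) * y ^ k := by
      rw [hA0, ← Finset.sum_sub_distrib]
      refine Finset.sum_congr rfl fun k _ => by ring
    rw [hsplit] at hev'
    rw [hP, Polynomial.eval_finset_sum]
    simp only [Polynomial.eval_mul, Polynomial.eval_C, Polynomial.eval_pow, Polynomial.eval_X,
      Polynomial.eval_add]
    linarith
  have hcoeff : ∀ j, P.coeff j
      = if j ∈ Finset.Icc 1 d then (DS S j : ℝ) / (S.card : ℝ) else 0 := by
    intro j
    rw [hP, Polynomial.finset_sum_coeff]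
    rw [Finset.sum_congr rfl (fun k _ => by
      rw [Polynomial.coeff_C_mul, Polynomial.coeff_X_pow])]
    simp only [mul_ite, mul_one, mul_zero]
    rw [Finset.sum_ite_eq (Finset.Icc 1 d) j (fun k => (DS S k : ℝ) / (S.card : ℝ))]
  have hD1 : DS S 1 = S.card := by
    have h1c := hcoeff 1
    rw [hPX] at h1c
    rw [Polynomial.coeff_add, Polynomial.coeff_X_one, Polynomial.coeff_C,
      if_neg (by norm_num)] at h1c
    rw [if_pos (Finset.mem_Icc.mpr ⟨le_refl 1, hd⟩)] at h1c
    field_simp at h1c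
    exact_mod_cast (by linarith : (DS S 1 : ℝ) = S.card)
  -- all other fiber counts are zero
  have hsum := sum_DS S
  have h1mem : 1 ∈ Finset.range (d+1) := Finset.mem_range.mpr (by omega)
  rw [← Finset.add_sum_erase _ _ h1mem, hD1] at hsum
  have hzero : ∀ k ∈ (Finset.range (d+1)).erase 1, DS S k = 0 := by
    intro k hk
    have h0 : ∑ k ∈ (Finset.range (d+1)).erase 1, DS S k = 0 := by omega
    exact (Finset.sum_eq_zero_iff.mp h0) k hk
  intro σ hσ
  by_contra hne
  have hmem : nfix σ ∈ (Finset.range (d+1)).erase 1 :=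
    Finset.mem_erase.mpr ⟨hne, nfix_mem_range σ⟩
  have hpos : 0 < DS S (nfix σ) := by
    rw [DS_eq, Finset.card_pos]
    exact ⟨σ, Finset.mem_filter.mpr ⟨hσ, rfl⟩⟩
  rw [hzero _ hmem] at hpos
  exact absurd hpos (lt_irrefl 0)

end CharPolyBridge
/-- `FPP(W_S) = 0` iff `f_S'(0) ≤ 1` and `f_S` is not the identity;
moreover `f_S'(0)` is the average number of fixed points of the elements of `S`. -/
theorem stmt8 (d : ℕ) (hd : 2 ≤ d) (S : Finset (Equiv.Perm (Fin d))) (hS : S.Nonempty) :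
    (Filter.Tendsto (FPPseq (WS (S : Set (Equiv.Perm (Fin d)))))
        Filter.atTop (nhds 0) ↔
      ((Polynomial.derivative (charPoly S)).eval 0 ≤ 1 ∧ charPoly S ≠ Polynomial.X)) ∧
    (Polynomial.derivative (charPoly S)).eval 0 =
      (∑ σ ∈ S, ((Finset.univ.filter fun x : Fin d => σ x = x).card : ℝ)) /
        (S.card : ℝ) := by
  have hdpos : 0 < d := by omega
  have hd1 : 1 ≤ d := by omega
  have hN : (0:ℝ) < (S.card : ℝ) := by exact_mod_cast Finset.card_pos.mpr hS
  constructor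
  · constructor
    · intro ht
      constructor
      · by_contra hgt
        push_neg at hgt
        rw [deriv_charPoly_eval0' S hS, lt_div_iff₀ hN, one_mul] at hgt
        have hm : S.card < ∑ σ ∈ S, nfix σ := by exact_mod_cast hgt
        exact not_tendsto_of_supercritical S hdpos hS hm ht
      · intro hX
        exact not_tendsto_of_allfix1 S hdpos hS (allfix1_of_charPoly S hd1 hS hX) ht
    · rintro ⟨hle, hne⟩
      rw [deriv_charPoly_eval0' S hS, div_le_one hN] at hle
      have hm : ∑ σ ∈ S, nfix σ ≤ S.card := by exact_mod_cast hle
      have hD0 : 0 < (S.filter fun σ => nfix σ = 0).card := by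
        by_contra h0
        push_neg at h0
        have h0' : (S.filter fun σ => nfix σ = 0).card = 0 := by omega
        have h1le : ∀ σ ∈ S, 1 ≤ nfix σ := by
          intro σ hσ
          by_contra hz
          push_neg at hz
          have hz0 : nfix σ = 0 := by omega
          have : σ ∈ S.filter fun σ => nfix σ = 0 := Finset.mem_filter.mpr ⟨hσ, hz0⟩
          rw [Finset.card_eq_zero.mp h0'] at this
          exact absurd this (Finset.notMem_empty σ)
        have hall : ∀ σ ∈ S, nfix σ = 1 := by
          by_contra hex
          push_neg at hex
          obtain ⟨σ0, hσ0, hσ0ne⟩ := hex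
          have hlt : ∑ _σ ∈ S, 1 < ∑ σ ∈ S, nfix σ :=
            Finset.sum_lt_sum h1le ⟨σ0, hσ0, by have := h1le σ0 hσ0; omega⟩
          rw [Finset.sum_const, smul_eq_mul, mul_one] at hlt
          omega
        exact hne (charPoly_of_allfix1 S hd1 hS hall)
      exact tendsto_of_subcritical S hdpos hS hm hD0
  · exact deriv_charPoly_eval0' S hS

end TreePaper
end

section
/- Let d ≥ 2 and let S ⊆ Sym(d) be nonempty. Then FPP(W_S) = 1 if and only if every permutation in S fixes at least one point of {1,…,d} (equivalently, D_S(0) = 0). -/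
open Filter Polynomial

namespace TreePaper

variable {X : Type*}

section Aux

variable {d : ℕ}

def pAct : (V X → Equiv.Perm X) → V X → V X
  | _, [] => []
  | ℓ, a :: w => ℓ [] a :: pAct (fun v => ℓ (a :: v)) w

def pInv : (V X → Equiv.Perm X) → V X → V X
  | _, [] => []
  | ℓ, a :: w => (ℓ [])⁻¹ a :: pInv (fun v => ℓ ((ℓ [])⁻¹ a :: v)) w

lemma pAct_pInv : ∀ (w : V X) (ℓ : V X → Equiv.Perm X), pAct ℓ (pInv ℓ w) = w
  | [], _ => rfl
  | a :: w, ℓ => by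
      simp only [pInv, pAct, Equiv.Perm.inv_def, Equiv.apply_symm_apply]
      exact congrArg _ (pAct_pInv w _)

lemma pInv_pAct : ∀ (w : V X) (ℓ : V X → Equiv.Perm X), pInv ℓ (pAct ℓ w) = w
  | [], _ => rfl
  | a :: w, ℓ => by
      simp only [pAct, pInv, Equiv.Perm.inv_def, Equiv.symm_apply_apply]
      exact congrArg _ (pInv_pAct w _)

def pEquiv (ℓ : V X → Equiv.Perm X) : Equiv.Perm (V X) :=
  ⟨pAct ℓ, pInv ℓ, fun w => pInv_pAct w ℓ, fun w => pAct_pInv w ℓ⟩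

@[simp] lemma pEquiv_apply (ℓ : V X → Equiv.Perm X) (w : V X) : pEquiv ℓ w = pAct ℓ w := rfl

@[simp] lemma pEquiv_inv_apply (ℓ : V X → Equiv.Perm X) (w : V X) :
    (pEquiv ℓ)⁻¹ w = pInv ℓ w := rfl

lemma pAct_append : ∀ (v : V X) (ℓ : V X → Equiv.Perm X) (u : V X),
    pAct ℓ (v ++ u) = pAct ℓ v ++ pAct (fun w => ℓ (v ++ w)) u
  | [], ℓ, u => by simp [pAct]
  | a :: v, ℓ, u => by
      simp only [List.cons_append, pAct, List.cons.injEq, true_and]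
      simpa using pAct_append v (fun w => ℓ (a :: w)) u

lemma pAct_concat (ℓ : V X → Equiv.Perm X) (v : V X) (a : X) :
    pAct ℓ (v ++ [a]) = pAct ℓ v ++ [ℓ v a] := by
  rw [pAct_append]
  simp [pAct]

lemma length_pAct : ∀ (w : V X) (ℓ : V X → Equiv.Perm X), (pAct ℓ w).length = w.length
  | [], _ => rfl
  | a :: w, ℓ => by simp [pAct, length_pAct w]

lemma pInv_concat : ∀ (v : V X) (ℓ : V X → Equiv.Perm X) (a : X),
    ∃ b : X, pInv ℓ (v ++ [a]) = pInv ℓ v ++ [b]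
  | [], ℓ, a => ⟨(ℓ [])⁻¹ a, rfl⟩
  | c :: v, ℓ, a => by
      obtain ⟨b, hb⟩ := pInv_concat v (fun w => ℓ ((ℓ [])⁻¹ c :: w)) a
      exact ⟨b, by simp only [List.cons_append, pInv, hb]⟩

lemma mem_AutT (g : Equiv.Perm (V X)) : g ∈ AutT X ↔ IsTreeHom g ∧ IsTreeHom g⁻¹ := Iff.rfl

lemma isTreeHom_pEquiv (ℓ : V X → Equiv.Perm X) : IsTreeHom (pEquiv ℓ) :=
  ⟨rfl, fun v a => ⟨ℓ v a, pAct_concat ℓ v a⟩⟩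

lemma isTreeHom_pEquiv_inv (ℓ : V X → Equiv.Perm X) : IsTreeHom (pEquiv ℓ)⁻¹ :=
  ⟨rfl, fun v a => by simpa using pInv_concat v ℓ a⟩

lemma hasLabel_pEquiv (ℓ : V X → Equiv.Perm X) (v : V X) : HasLabel (pEquiv ℓ) v (ℓ v) :=
  fun a => pAct_concat ℓ v a

lemma pEquiv_mem_WS {S : Set (Equiv.Perm X)} {ℓ : V X → Equiv.Perm X} (h : ∀ v, ℓ v ∈ S) :
    pEquiv ℓ ∈ WS S :=
  ⟨⟨isTreeHom_pEquiv ℓ, isTreeHom_pEquiv_inv ℓ⟩, fun v => ⟨ℓ v, h v, hasLabel_pEquiv ℓ v⟩⟩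

lemma eq_pAct_of_labels (g : Equiv.Perm (V X)) (hg : g [] = []) (n : ℕ)
    (ℓ : V X → Equiv.Perm X) (h : ∀ v : V X, v.length < n → HasLabel g v (ℓ v)) :
    ∀ w : V X, w.length ≤ n → g w = pAct ℓ w := by
  intro w
  induction w using List.reverseRecOn with
  | nil => intro _; simpa [pAct] using hg
  | append_singleton v a ih =>
      intro hlen
      rw [List.length_append, List.length_singleton] at hlen
      have hv : v.length < n := by omega
      rw [h v hv a, ih (le_of_lt hv), pAct_concat]

lemma length_treeHom (g : Equiv.Perm (V X)) (hg : IsTreeHom g) :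
    ∀ w : V X, (g w).length = w.length := by
  intro w
  induction w using List.reverseRecOn with
  | nil => simp [hg.1]
  | append_singleton v a ih =>
      obtain ⟨b, hb⟩ := hg.2 v a
      simp [hb, ih]

def extP (n : ℕ) (σ₀ : Equiv.Perm (Fin d))
    (f : {l : List (Fin d) // l.length < n} → Equiv.Perm (Fin d)) :
    V (Fin d) → Equiv.Perm (Fin d) :=
  fun v => if h : v.length < n then f ⟨v, h⟩ else σ₀

noncomputable def Psi (n : ℕ) (σ₀ : Equiv.Perm (Fin d))
    (f : {l : List (Fin d) // l.length < n} → Equiv.Perm (Fin d)) :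
    {v : V (Fin d) // v.length = n} → V (Fin d) :=
  res n (pEquiv (extP n σ₀ f))

lemma Psi_injective (hd : 0 < d) (n : ℕ) (σ₀ : Equiv.Perm (Fin d)) :
    Function.Injective (Psi n σ₀) := by
  intro f f' hff
  set ℓ := extP n σ₀ f with hℓ
  set ℓ' := extP n σ₀ f' with hℓ'
  have key : ∀ w : V (Fin d), w.length ≤ n → pAct ℓ w = pAct ℓ' w := by
    intro w hw
    set u : V (Fin d) := w ++ List.replicate (n - w.length) (⟨0, hd⟩ : Fin d) with hu
    have hulen : u.length = n := by simp [hu]; omega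
    have h1 : pAct ℓ u = pAct ℓ' u := congrFun hff ⟨u, hulen⟩
    rw [hu, pAct_append, pAct_append] at h1
    exact List.append_inj_left h1 (by rw [length_pAct, length_pAct])
  funext v
  apply Equiv.ext
  intro a
  have h2 : pAct ℓ (v.1 ++ [a]) = pAct ℓ' (v.1 ++ [a]) := by
    apply key; simp; omega
  rw [pAct_concat, pAct_concat, key v.1 (le_of_lt v.2)] at h2
  have h3 := List.append_cancel_left h2
  have h4 : ℓ v.1 a = ℓ' v.1 a := by simpa using h3
  simpa [hℓ, hℓ', extP, dif_pos v.2] using h4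

lemma piSet_WS_eq {S : Finset (Equiv.Perm (Fin d))} {σ₀ : Equiv.Perm (Fin d)} (hσ₀ : σ₀ ∈ S)
    (n : ℕ) :
    piSet (WS (S : Set (Equiv.Perm (Fin d)))) n =
      Psi n σ₀ '' {f | ∀ v, f v ∈ S} := by
  ext F
  constructor
  · rintro ⟨g, hg, rfl⟩
    choose σ hσS hσ using hg.2
    refine ⟨fun v => σ v.1, fun v => hσS v.1, ?_⟩
    funext v
    exact (eq_pAct_of_labels g hg.1.1.1 n (extP n σ₀ fun v => σ v.1)
      (fun u hu => by simpa [extP, dif_pos hu] using hσ u) v.1 (le_of_eq v.2)).symm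
  · rintro ⟨f, hf, rfl⟩
    refine ⟨pEquiv (extP n σ₀ f), pEquiv_mem_WS ?_, rfl⟩
    intro v
    unfold extP
    split
    · exact hf _
    · exact hσ₀

lemma exists_fixed_vertex {S : Set (Equiv.Perm (Fin d))}
    (hfix : ∀ σ ∈ S, ∃ x : Fin d, σ x = x) {g : Equiv.Perm (V (Fin d))} (hg : g ∈ WS S) :
    ∀ n : ℕ, ∃ v : V (Fin d), v.length = n ∧ g v = v := by
  intro n
  induction n with
  | zero => exact ⟨[], rfl, hg.1.1.1⟩
  | succ n ih =>
      obtain ⟨v, hvl, hv⟩ := ih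
      obtain ⟨σ, hσS, hσ⟩ := hg.2 v
      obtain ⟨a, ha⟩ := hfix σ hσS
      exact ⟨v ++ [a], by simp [hvl], by rw [hσ a, hv, ha]⟩

lemma piSet_fin_ne {S : Finset (Equiv.Perm (Fin d))} {σ₀ : Equiv.Perm (Fin d)}
    (hσ₀ : σ₀ ∈ S) (n : ℕ) :
    (piSet (WS (S : Set (Equiv.Perm (Fin d)))) n).Finite ∧
      (piSet (WS (S : Set (Equiv.Perm (Fin d)))) n).Nonempty := by
  classical
  haveI : Fintype {l : List (Fin d) // l.length < n} := (List.finite_length_lt (Fin d) n).fintype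
  rw [piSet_WS_eq hσ₀ n]
  constructor
  · apply Set.Finite.image
    apply ((Fintype.piFinset fun _ : {l : List (Fin d) // l.length < n} => S).finite_toSet).subset
    intro f hf
    simpa [Fintype.mem_piFinset] using hf
  · exact ⟨_, ⟨fun _ => σ₀, fun v => hσ₀, rfl⟩⟩

lemma key_bound (hd : 0 < d) {S : Finset (Equiv.Perm (Fin d))} {σ₀ : Equiv.Perm (Fin d)}
    (hσ₀S : σ₀ ∈ S) (hσ₀ : ∀ x, σ₀ x ≠ x) {n : ℕ} (hn : 1 ≤ n) :
    ∃ N : ℕ, 1 ≤ N ∧ (piSet (WS (S : Set (Equiv.Perm (Fin d)))) n).ncard = S.card ^ N ∧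
      (fixSet (WS (S : Set (Equiv.Perm (Fin d)))) n).ncard ≤ S.card ^ N - S.card ^ (N - 1) := by
  classical
  haveI : Fintype {l : List (Fin d) // l.length < n} := (List.finite_length_lt (Fin d) n).fintype
  set T := {l : List (Fin d) // l.length < n}
  set r : T := ⟨[], by simp; omega⟩ with hr
  refine ⟨Fintype.card T, Fintype.card_pos_iff.mpr ⟨r⟩, ?_, ?_⟩
  · rw [piSet_WS_eq hσ₀S n]
    have hset : {f : T → Equiv.Perm (Fin d) | ∀ v, f v ∈ S}
        = ↑(Fintype.piFinset fun _ : T => S) := by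
      ext f; simp [Fintype.mem_piFinset]
    rw [hset, Set.ncard_image_of_injective _ (Psi_injective hd n σ₀), Set.ncard_coe_finset,
      Fintype.card_piFinset, Finset.prod_const, Finset.card_univ]
  · set A : Set (T → Equiv.Perm (Fin d)) :=
      ↑(Fintype.piFinset fun v : T => if v = r then ({σ₀} : Finset (Equiv.Perm (Fin d))) else S)
      with hA
    have hAP : Psi n σ₀ '' A ⊆ piSet (WS (S : Set (Equiv.Perm (Fin d)))) n := by
      rw [piSet_WS_eq hσ₀S n]
      apply Set.image_mono
      intro f hf v
      have := (Fintype.mem_piFinset).mp hf v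
      split at this
      · simpa using Finset.mem_singleton.mp this ▸ hσ₀S
      · exact this
    have hdisj : ∀ F ∈ Psi n σ₀ '' A, F ∉ fixSet (WS (S : Set (Equiv.Perm (Fin d)))) n := by
      rintro F ⟨f, hf, rfl⟩ ⟨-, v, hv⟩
      obtain ⟨a, w, hvw⟩ : ∃ a w, v.1 = a :: w := by
        rcases hvw : v.1 with - | ⟨a, w⟩
        · exfalso; have := v.2; rw [hvw] at this; simp at this; omega
        · exact ⟨a, w, rfl⟩
      have hfr : f r = σ₀ := by
        have := (Fintype.mem_piFinset).mp hf r
        rw [if_pos rfl] at this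
        exact Finset.mem_singleton.mp this
      have hroot : extP n σ₀ f [] = σ₀ := by
        have h0 : ([] : List (Fin d)).length < n := by simp; omega
        rw [extP, dif_pos h0]
        exact (congrArg f (Subtype.ext rfl)).trans hfr
      have : pAct (extP n σ₀ f) (a :: w) = a :: w := by
        rw [← hvw]; simpa [Psi, res] using hv
      rw [pAct] at this
      have hhead : extP n σ₀ f [] a = a := (List.cons.injEq _ _ _ _ ▸ this).1
      rw [hroot] at hhead
      exact hσ₀ a hhead
    have hsub : fixSet (WS (S : Set (Equiv.Perm (Fin d)))) n
        ⊆ piSet (WS (S : Set (Equiv.Perm (Fin d)))) n \ Psi n σ₀ '' A := by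
      intro F hF
      exact ⟨hF.1, fun hA' => hdisj F hA' hF⟩
    have hpifin := (piSet_fin_ne hσ₀S n).1
    have hAfin : (Psi n σ₀ '' A).Finite := ((Fintype.piFinset _).finite_toSet).image _
    have hAcard : (Psi n σ₀ '' A).ncard = S.card ^ (Fintype.card T - 1) := by
      rw [hA, Set.ncard_image_of_injective _ (Psi_injective hd n σ₀), Set.ncard_coe_finset,
        Fintype.card_piFinset]
      have hcongr : ∀ v : T, ((if v = r then ({σ₀} : Finset (Equiv.Perm (Fin d))) else S).card)
          = if v = r then 1 else S.card := by
        intro v; split <;> simp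
      rw [Finset.prod_congr rfl fun v _ => hcongr v,
        ← Finset.mul_prod_erase Finset.univ _ (Finset.mem_univ r), if_pos rfl, one_mul,
        Finset.prod_congr rfl fun v hv => if_neg (Finset.mem_erase.mp hv).1,
        Finset.prod_const, Finset.card_erase_of_mem (Finset.mem_univ r), Finset.card_univ]
    calc (fixSet (WS (S : Set (Equiv.Perm (Fin d)))) n).ncard
        ≤ (piSet (WS (S : Set (Equiv.Perm (Fin d)))) n \ Psi n σ₀ '' A).ncard :=
          Set.ncard_le_ncard hsub hpifin.diff
      _ = (piSet (WS (S : Set (Equiv.Perm (Fin d)))) n).ncard - (Psi n σ₀ '' A).ncard :=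
          Set.ncard_diff hAP hAfin
      _ ≤ S.card ^ Fintype.card T - S.card ^ (Fintype.card T - 1) := by
          rw [hAcard]
          have : (piSet (WS (S : Set (Equiv.Perm (Fin d)))) n).ncard
              = S.card ^ Fintype.card T := by
            rw [piSet_WS_eq hσ₀S n]
            have hset : {f : T → Equiv.Perm (Fin d) | ∀ v, f v ∈ S}
                = ↑(Fintype.piFinset fun _ : T => S) := by
              ext f; simp [Fintype.mem_piFinset]
            rw [hset, Set.ncard_image_of_injective _ (Psi_injective hd n σ₀),
              Set.ncard_coe_finset, Fintype.card_piFinset, Finset.prod_const, Finset.card_univ]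
          omega

end Aux

/-- `FPP(W_S) = 1` iff every permutation in `S` fixes at least one point. -/
theorem stmt9 (d : ℕ) (hd : 2 ≤ d) (S : Finset (Equiv.Perm (Fin d))) (hS : S.Nonempty) :
    Filter.Tendsto (FPPseq (WS (S : Set (Equiv.Perm (Fin d))))) Filter.atTop (nhds 1) ↔
      ∀ σ ∈ S, ∃ x : Fin d, σ x = x := by
  constructor
  · intro h σ hσS
    by_contra hfp
    push_neg at hfp
    set s := (S.card : ℝ) with hs
    have hs1 : (1 : ℝ) ≤ s := by
      rw [hs]
      exact_mod_cast Nat.one_le_iff_ne_zero.mpr (Finset.card_ne_zero_of_mem hσS)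
    have hs0 : (0 : ℝ) < s := by linarith
    have hbound : ∀ n, 1 ≤ n → FPPseq (WS (S : Set (Equiv.Perm (Fin d)))) n ≤ 1 - 1 / s := by
      intro n hn
      obtain ⟨N, hN1, hpi, hfix⟩ := key_bound (by omega) hσS hfp hn
      have hple : S.card ^ (N - 1) ≤ S.card ^ N :=
        Nat.pow_le_pow_right (Finset.card_pos.mpr ⟨σ, hσS⟩) (by omega)
      have hfixR : ((fixSet (WS (S : Set (Equiv.Perm (Fin d)))) n).ncard : ℝ)
          ≤ s ^ N - s ^ (N - 1) := by
        calc ((fixSet (WS (S : Set (Equiv.Perm (Fin d)))) n).ncard : ℝ)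
            ≤ ((S.card ^ N - S.card ^ (N - 1) : ℕ) : ℝ) := by exact_mod_cast hfix
          _ = s ^ N - s ^ (N - 1) := by push_cast [Nat.cast_sub hple]; ring
      have hsN : (0 : ℝ) < s ^ N := by positivity
      have hfin : (1 : ℝ) - 1 / s = (s ^ N - s ^ (N - 1)) / s ^ N := by
        have hNs : s ^ N = s ^ (N - 1) * s := by
          rw [← pow_succ]; congr 1; omega
        rw [hNs]
        have hsm : (0 : ℝ) < s ^ (N - 1) := by positivity
        field_simp
      rw [FPPseq, hpi, hfin]
      have hcast : ((S.card ^ N : ℕ) : ℝ) = s ^ N := by push_cast [hs]; ring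
      rw [hcast]
      exact div_le_div_of_nonneg_right hfixR hsN.le
    have hlt : (1 : ℝ) - 1 / s < 1 := by
      have : (0 : ℝ) < 1 / s := by positivity
      linarith
    obtain ⟨n, hgt, hn1⟩ :=
      ((h.eventually (eventually_gt_nhds hlt)).and (Filter.eventually_ge_atTop 1)).exists
    exact absurd (hbound n hn1) (not_le.mpr hgt)
  · intro hfix
    obtain ⟨σ₀, hσ₀⟩ := hS
    have h1 : ∀ n, FPPseq (WS (S : Set (Equiv.Perm (Fin d)))) n = 1 := by
      intro n
      have heq : fixSet (WS (S : Set (Equiv.Perm (Fin d)))) n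
          = piSet (WS (S : Set (Equiv.Perm (Fin d)))) n := by
        ext F
        refine ⟨fun h => h.1, fun hF => ⟨hF, ?_⟩⟩
        obtain ⟨g, hg, rfl⟩ := hF
        obtain ⟨v, hvl, hv⟩ := exists_fixed_vertex
          (fun σ hσ => hfix σ (by exact_mod_cast hσ)) hg n
        exact ⟨⟨v, hvl⟩, hv⟩
      obtain ⟨hfin, hne⟩ := piSet_fin_ne hσ₀ n
      have hpos : 0 < (piSet (WS (S : Set (Equiv.Perm (Fin d)))) n).ncard :=
        (Set.ncard_pos hfin).mpr hne
      rw [FPPseq, heq, div_self]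
      exact_mod_cast hpos.ne'
    exact tendsto_const_nhds.congr fun n => (h1 n).symm


end TreePaper
end

section
/- Let G be a finite group acting on a finite set Y, let H ≤ G, let g ∈ G and let A = gH. Define Y* = {y ∈ Y : there exists h ∈ H with h·y = g^{−1}·y}. If g belongs to the normalizer N_G(H) of H in G, then Y* is invariant under the action of H, and (1/#A) · Σ_{a ∈ A} #Y^a = #(Y*/H), the number of H-orbits on Y*. -/
open Filter Polynomial

namespace TreePaper

variable {X : Type*}

open Finset MulAction in
open Pointwise in
/-- Burnside's lemma for cosets, normalizer case: if `g ∈ N_G(H)` and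
`Y* = {y : ∃ h ∈ H, h·y = g⁻¹·y}`, then `Y*` is `H`-invariant and the average number
of fixed points of the elements of `A = gH` equals the number of `H`-orbits on `Y*`. -/
theorem stmt12 {G Y : Type*} [Group G] [Finite G] [Finite Y] [MulAction G Y]
    (H : Subgroup G) (g : G) (hg : g ∈ Subgroup.normalizer (H : Set G))
    (A : Set G) (hA : A = g • (H : Set G))
    (Ystar : Set Y) (hY : Ystar = {y : Y | ∃ h ∈ H, h • y = g⁻¹ • y}) :
    (∀ h ∈ H, ∀ y ∈ Ystar, h • y ∈ Ystar) ∧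
    ((A.ncard : ℝ))⁻¹ * ∑ᶠ a ∈ A, ({y : Y | a • y = y}.ncard : ℝ) =
      (((fun y : Y => MulAction.orbit H y) '' Ystar).ncard : ℝ) := by
  classical
  cases nonempty_fintype G
  cases nonempty_fintype Y
  subst hA hY
  -- notation
  set Ystar : Set Y := {y : Y | ∃ h ∈ H, h • y = g⁻¹ • y} with hYdef
  have hconj : ∀ h ∈ H, g⁻¹ * h * g ∈ H := by
    intro h hh
    have e : g * (g⁻¹ * h * g) * g⁻¹ = h := by group
    exact (Subgroup.mem_normalizer_iff.mp hg (g⁻¹ * h * g)).mpr (by rw [e]; exact hh)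
  -- Part 1: invariance
  have hinv : ∀ h ∈ H, ∀ y ∈ Ystar, h • y ∈ Ystar := by
    intro h' hh' y hy
    obtain ⟨h, hh, hhy⟩ := hy
    refine ⟨(g⁻¹ * h' * g) * h * h'⁻¹, mul_mem (mul_mem (hconj h' hh') hh) (inv_mem hh'), ?_⟩
    have key : (g * h) • y = y := by rw [mul_smul, hhy, smul_inv_smul]
    have e : (g⁻¹ * h' * g) * h * h'⁻¹ * h' = (g⁻¹ * h') * (g * h) := by group
    rw [← mul_smul, e, mul_smul, key, mul_smul]
  refine ⟨hinv, ?_⟩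
  -- Finsets
  set Afin : Finset G := (g • (H : Set G)).toFinset with hAfin
  set Hfin : Finset G := (H : Set G).toFinset with hHfin
  set Sfin : Finset Y := Ystar.toFinset with hSfin
  set c : Y → ℕ := fun y => (univ.filter fun h => h ∈ H ∧ h • y = y).card with hc
  -- Lemma C : cosets of stabilizer have stabilizer's cardinality
  have lemC : ∀ (y z : Y) (h₀ : G), h₀ ∈ H → h₀ • y = z →
      (univ.filter fun h => h ∈ H ∧ h • y = z).card = c y := by
    intro y z h₀ hh₀ hz
    refine Finset.card_bij' (fun h _ => h₀⁻¹ * h) (fun h _ => h₀ * h) ?_ ?_ ?_ ?_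
    · intro a ha
      simp only [mem_filter, mem_univ, true_and] at ha ⊢
      refine ⟨mul_mem (inv_mem hh₀) ha.1, ?_⟩
      rw [mul_smul, ha.2, ← hz, inv_smul_smul]
    · intro a ha
      simp only [mem_filter, mem_univ, true_and] at ha ⊢
      refine ⟨mul_mem hh₀ ha.1, ?_⟩
      rw [mul_smul, ha.2, hz]
    · intro a _; group
    · intro a _; group
  -- Lemma D : points in the same H-orbit have equinumerous stabilizers
  have lemD : ∀ (y z : Y) (k : G), k ∈ H → k • y = z → c z = c y := by
    intro y z k hk hz
    refine Finset.card_bij' (fun h _ => k⁻¹ * h * k) (fun h _ => k * h * k⁻¹) ?_ ?_ ?_ ?_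
    · intro a ha
      simp only [mem_filter, mem_univ, true_and] at ha ⊢
      refine ⟨mul_mem (mul_mem (inv_mem hk) ha.1) hk, ?_⟩
      rw [mul_smul, mul_smul, hz, ha.2, ← hz, inv_smul_smul]
    · intro a ha
      simp only [mem_filter, mem_univ, true_and] at ha ⊢
      refine ⟨mul_mem (mul_mem hk ha.1) (inv_mem hk), ?_⟩
      rw [mul_smul, mul_smul, ← hz, inv_smul_smul, ha.2, hz]
    · intro a _; group
    · intro a _; group
  -- membership in orbit gives a witness in H
  have orbit_wit : ∀ (y z : Y), z ∈ orbit H y → ∃ k ∈ H, k • y = z := by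
    intro y z hzy
    obtain ⟨⟨k, hk⟩, rfl⟩ := hzy
    exact ⟨k, hk, rfl⟩
  -- sum of stabilizer sizes over one orbit is |H|
  have orbit_sum : ∀ y₀ : Y, ∑ z ∈ (orbit H y₀).toFinset, c z = Hfin.card := by
    intro y₀
    have hmaps : ∀ h ∈ Hfin, h • y₀ ∈ (orbit H y₀).toFinset := by
      intro h hh
      rw [hHfin, Set.mem_toFinset] at hh
      rw [Set.mem_toFinset]
      exact ⟨⟨h, hh⟩, rfl⟩
    rw [Finset.card_eq_sum_card_fiberwise hmaps]
    refine Finset.sum_congr rfl ?_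
    intro z hz
    rw [Set.mem_toFinset] at hz
    obtain ⟨k, hk, hkz⟩ := orbit_wit y₀ z hz
    rw [lemD y₀ z k hk hkz, ← lemC y₀ z k hk hkz]
    congr 1
    ext h
    simp [hHfin, Set.mem_toFinset]
  -- the total sum over Ystar
  set Ofin : Finset (Set Y) := Sfin.image (fun y => orbit H y) with hOfin
  have total : ∑ y ∈ Sfin, c y = Ofin.card * Hfin.card := by
    rw [← Finset.sum_fiberwise_of_maps_to (t := Ofin) (g := fun y => orbit H y) (fun y hy => Finset.mem_image_of_mem _ hy) c]
    refine (Finset.sum_congr rfl ?_).trans (by rw [Finset.sum_const, smul_eq_mul])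
    intro O hO
    obtain ⟨y₀, hy₀S, rfl⟩ := Finset.mem_image.mp hO
    have hy₀Y : y₀ ∈ Ystar := Set.mem_toFinset.mp hy₀S
    have hfib : Sfin.filter (fun y => orbit H y = orbit H y₀) = (orbit H y₀).toFinset := by
      ext z
      simp only [mem_filter, Set.mem_toFinset, hSfin]
      constructor
      · rintro ⟨_, h2⟩
        rw [← h2]
        exact mem_orbit_self z
      · intro hz
        obtain ⟨k, hk, hkz⟩ := orbit_wit y₀ z hz
        exact ⟨hkz ▸ hinv k hk y₀ hy₀Y, MulAction.orbit_eq_iff.mpr hz⟩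
    rw [hfib, orbit_sum y₀]
  -- double counting: sum over the coset A of fixed-point counts
  have swap : ∑ a ∈ Afin, (univ.filter fun y : Y => a • y = y).card
      = ∑ y : Y, (Afin.filter fun a => a • y = y).card := by
    simp_rw [Finset.card_filter]
    exact Finset.sum_comm
  have step2 : ∀ y : Y, (Afin.filter fun a => a • y = y).card
      = (univ.filter fun h => h ∈ H ∧ h • y = g⁻¹ • y).card := by
    intro y
    refine Finset.card_bij' (fun a _ => g⁻¹ * a) (fun h _ => g * h) ?_ ?_ ?_ ?_
    · intro a ha
      simp only [mem_filter, mem_univ, true_and, hAfin, Set.mem_toFinset] at ha ⊢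
      refine ⟨?_, ?_⟩
      · have := Set.mem_smul_set_iff_inv_smul_mem.mp ha.1
        simpa [smul_eq_mul] using this
      · rw [mul_smul, ha.2]
    · intro h hh
      simp only [mem_filter, mem_univ, true_and, hAfin, Set.mem_toFinset] at hh ⊢
      refine ⟨Set.mem_smul_set_iff_inv_smul_mem.mpr (by simpa [smul_eq_mul] using hh.1), ?_⟩
      rw [mul_smul, hh.2, smul_inv_smul]
    · intro a _; group
    · intro a _; group
  have step3 : ∑ y : Y, (univ.filter fun h => h ∈ H ∧ h • y = g⁻¹ • y).card
      = ∑ y ∈ Sfin, c y := by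
    rw [← Finset.sum_subset (Finset.subset_univ Sfin) ?_]
    · refine Finset.sum_congr rfl ?_
      intro y hy
      obtain ⟨h₀, hh₀, hh₀y⟩ := Set.mem_toFinset.mp hy
      exact lemC y (g⁻¹ • y) h₀ hh₀ hh₀y
    · intro y _ hy
      rw [Finset.card_eq_zero, Finset.filter_eq_empty_iff]
      intro h _
      rintro ⟨hh, hhy⟩
      exact hy (Set.mem_toFinset.mpr ⟨h, hh, hhy⟩)
  have grand : ∑ a ∈ Afin, (univ.filter fun y : Y => a • y = y).card = Ofin.card * Hfin.card := by
    rw [swap]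
    calc ∑ y : Y, (Afin.filter fun a => a • y = y).card
        = ∑ y : Y, (univ.filter fun h => h ∈ H ∧ h • y = g⁻¹ • y).card :=
          Finset.sum_congr rfl fun y _ => step2 y
      _ = ∑ y ∈ Sfin, c y := step3
      _ = Ofin.card * Hfin.card := total
  -- cardinalities of A and H agree
  have hAcard : (g • (H : Set G)).ncard = Hfin.card := by
    rw [Set.ncard_smul_set, Set.ncard_eq_toFinset_card']
  have hHpos : 0 < Hfin.card := Finset.card_pos.mpr ⟨1, Set.mem_toFinset.mpr H.one_mem⟩
  -- assemble
  have hfin1 : ∑ᶠ a ∈ (g • (H : Set G)), ({y : Y | a • y = y}.ncard : ℝ)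
      = ∑ a ∈ Afin, (((univ.filter fun y : Y => a • y = y).card : ℕ) : ℝ) := by
    rw [← finsum_mem_coe_finset]
    have : ((Afin : Set G)) = g • (H : Set G) := Set.coe_toFinset _
    rw [this]
    refine finsum_mem_congr rfl ?_
    intro a _
    congr 1
    rw [Set.ncard_eq_toFinset_card']
    congr 1
    ext y
    simp
  have hRHS : ((fun y : Y => orbit H y) '' Ystar).ncard = Ofin.card := by
    rw [Set.ncard_eq_toFinset_card', Set.toFinset_image]
  rw [hfin1, hRHS, hAcard, ← Nat.cast_sum, grand]
  rw [Nat.cast_mul]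
  field_simp


end TreePaper
end
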